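/- arXiv:1810.05907 — 7 statements merged into one kernel-verified Lean document; each statement's English description precedes it below -/
import Mathlib

section
/- Let p be an odd prime, N a natural number, and n ≥ 2 an integer. For an integer m ≥ 1 and inputs J : {(i,j) : 1 ≤ i < j ≤ m} → ZMod p and B, C : {1,…,m} → ZMod p, define the mod-p partition function Z_m(J,B,C) = Σ_{σ∈{−1,1}^m} 2^{N·f(m,σ)} · (Π_{i : σ_i = −1} B_i) · (Π_{i : σ_i = +1} C_i) · (Π_{i<j : σ_i ≠ σ_j} J_{ij}), where I_m(σ) = #{(i,j) : 1 ≤ i < j ≤ m, σ_i ≠ σ_j}, f(m,σ) = m(m−1)/2 − m − I_m(σ) ∈ ℤ, and 2^k for k ∈ ℤ denotes the k-th integer power of the unit 2 in ZMod p. Then Z_n(J,B,C) = C_n · 2^{(n−2)N} · Z_{n−1}(J′,B⁺,C⁺) + B_n · 2^{(n−2)N} · Z_{n−1}(J′,B⁻,C⁻), where J′_{ij} = J_{ij} for 1 ≤ i < j ≤ n−1, B⁺_i = 2^{−N} B_i J_{in}, C⁺_i = C_i, B⁻_i = B_i, and C⁻_i = 2^{−N} C_i J_{in} for 1 ≤ i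 ≤ n−1. -/
/-- The set of cut pairs: pairs `(i,j)` with `1 ≤ i < j ≤ m` such that exactly one of
`i, j` belongs to `S` (where `S` is the set of sites with spin `+1`). -/
def cutSet (m : ℕ) (S : Finset ℕ) : Finset (ℕ × ℕ) :=
  ((Finset.Icc 1 m) ×ˢ (Finset.Icc 1 m)).filter
    (fun q => q.1 < q.2 ∧ ¬ ((q.1 ∈ S) ↔ (q.2 ∈ S)))

/-- `f(m,σ) = m(m-1)/2 - m - I_m(σ)` as an integer. -/
def fExp (m : ℕ) (S : Finset ℕ) : ℤ :=
  ((m * (m - 1) / 2 : ℕ) : ℤ) - (m : ℤ) - ((cutSet m S).card : ℤ)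

/-- The mod-`p` partition function `Z_m(J,B,C)`, where the spin configuration
`σ ∈ {-1,1}^m` is encoded by the set `S ⊆ {1,…,m}` of sites with `σ_i = +1`. -/
noncomputable def Zmod (p : ℕ) [Fact p.Prime] (N m : ℕ)
    (J : ℕ → ℕ → ZMod p) (B C : ℕ → ZMod p) : ZMod p :=
  ∑ S ∈ (Finset.Icc 1 m).powerset,
    (2 : ZMod p) ^ ((N : ℤ) * fExp m S) *
      (∏ i ∈ (Finset.Icc 1 m) \ S, B i) *
      (∏ i ∈ S, C i) *
      (∏ q ∈ cutSet m S, J q.1 q.2)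

lemma half_step (m : ℕ) : (m+2) * (m+2-1) / 2 = (m+1) * (m+1-1) / 2 + (m+1) := by
  have h : (m+2) * (m+2-1) = (m+1) * (m+1-1) + (m+1) * 2 := by
    have e1 : m + 2 - 1 = m + 1 := by omega
    have e2 : m + 1 - 1 = m := by omega
    rw [e1, e2]; ring
  rw [h, Nat.add_mul_div_right _ _ (by norm_num)]

lemma inj_pair (n : ℕ) : Function.Injective (fun i : ℕ => (i, n)) := by
  intro a b h; exact congrArg Prod.fst h

lemma disj_cut (m n : ℕ) (hn : m < n) (S T : Finset ℕ) :
    Disjoint (cutSet m S) (T.image (fun i => (i, n))) := by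
  rw [Finset.disjoint_left]
  rintro ⟨i, j⟩ hq hq'
  simp only [cutSet, Finset.mem_filter, Finset.mem_product, Finset.mem_Icc] at hq
  simp only [Finset.mem_image, Prod.mk.injEq] at hq'
  obtain ⟨x, _, _, rfl⟩ := hq'
  omega

lemma cutSet_step (m : ℕ) (S : Finset ℕ) (hS : S ⊆ Finset.Icc 1 (m+1)) :
    cutSet (m+2) S = cutSet (m+1) S ∪ (S.image (fun i => (i, m+2))) := by
  have hSn : ∀ x ∈ S, 1 ≤ x ∧ x ≤ m+1 := fun x hx => Finset.mem_Icc.mp (hS hx)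
  have hnS : m+2 ∉ S := fun h' => by have := (hSn _ h').2; omega
  ext ⟨i, j⟩
  simp only [cutSet, Finset.mem_union, Finset.mem_filter, Finset.mem_product, Finset.mem_Icc,
    Finset.mem_image, Prod.mk.injEq]
  constructor
  · rintro ⟨⟨⟨hi1, hi2⟩, hj1, hj2⟩, hij, hx⟩
    by_cases hjn : j = m+2
    · rw [hjn] at hx hij
      have hiS : i ∈ S := by tauto
      exact Or.inr ⟨i, hiS, rfl, hjn.symm⟩
    · exact Or.inl ⟨⟨⟨hi1, by omega⟩, hj1, by omega⟩, hij, hx⟩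
  · rintro (⟨⟨⟨hi1, hi2⟩, hj1, hj2⟩, hij, hx⟩ | ⟨x, hx, hxi, hxn⟩)
    · exact ⟨⟨⟨hi1, by omega⟩, hj1, by omega⟩, hij, hx⟩
    · subst hxi; subst hxn
      have hx2 := hSn x hx
      exact ⟨⟨⟨hx2.1, by omega⟩, by omega, le_rfl⟩, by omega, by tauto⟩

lemma cutSet_insert_step (m : ℕ) (S : Finset ℕ) (hS : S ⊆ Finset.Icc 1 (m+1)) :
    cutSet (m+2) (insert (m+2) S) =
      cutSet (m+1) S ∪ ((Finset.Icc 1 (m+1) \ S).image (fun i => (i, m+2))) := by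
  have hSn : ∀ x ∈ S, 1 ≤ x ∧ x ≤ m+1 := fun x hx => Finset.mem_Icc.mp (hS hx)
  have hnS : m+2 ∉ S := fun h' => by have := (hSn _ h').2; omega
  ext ⟨i, j⟩
  simp only [cutSet, Finset.mem_union, Finset.mem_filter, Finset.mem_product, Finset.mem_Icc,
    Finset.mem_image, Finset.mem_insert, Finset.mem_sdiff, Prod.mk.injEq]
  constructor
  · rintro ⟨⟨⟨hi1, hi2⟩, hj1, hj2⟩, hij, hx⟩
    by_cases hjn : j = m+2
    · rw [hjn] at hx hij
      have hiS : i ∉ S := by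
        intro h; exact hx ⟨fun _ => Or.inl rfl, fun _ => Or.inr h⟩
      exact Or.inr ⟨i, ⟨⟨hi1, by omega⟩, hiS⟩, rfl, hjn.symm⟩
    · have hin : i ≠ m+2 := by omega
      refine Or.inl ⟨⟨⟨hi1, by omega⟩, hj1, by omega⟩, hij, fun h => hx ?_⟩
      constructor
      · rintro (h' | h'); · omega
        · exact Or.inr (h.1 h')
      · rintro (h' | h'); · omega
        · exact Or.inr (h.2 h')
  · rintro (⟨⟨⟨hi1, hi2⟩, hj1, hj2⟩, hij, hx⟩ | ⟨x, ⟨⟨hx1, hx2⟩, hxS⟩, hxi, hxn⟩)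
    · refine ⟨⟨⟨hi1, by omega⟩, hj1, by omega⟩, hij, fun h => hx ?_⟩
      constructor
      · intro h'
        rcases h.1 (Or.inr h') with h'' | h''; · omega
        · exact h''
      · intro h'
        rcases h.2 (Or.inr h') with h'' | h''; · omega
        · exact h''
    · subst hxi; subst hxn
      refine ⟨⟨⟨hx1, by omega⟩, by omega, le_rfl⟩, by omega, fun h => ?_⟩
      rcases h.2 (Or.inl rfl) with h' | h'
      · omega
      · exact hxS h'

lemma hsplit_gen {p : ℕ} [Fact p.Prime] (hp2 : (2 : ZMod p) ≠ 0) (N m k : ℕ)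
    (S' S : Finset ℕ) (hcard : (cutSet (m+2) S').card = (cutSet (m+1) S).card + k) :
    (2 : ZMod p) ^ ((N : ℤ) * fExp (m+2) S') =
      (2 : ZMod p) ^ ((N : ℤ) * fExp (m+1) S) * (2 : ZMod p) ^ (m * N) *
        ((2 : ZMod p) ^ (-(N : ℤ))) ^ k := by
  have hf : (N:ℤ) * fExp (m+2) S' =
      (N:ℤ) * fExp (m+1) S + ((m*N : ℕ) : ℤ) + (-(N:ℤ)) * (k : ℤ) := by
    simp only [fExp, hcard, half_step m]
    push_cast
    ring
  rw [hf, zpow_add₀ hp2, zpow_add₀ hp2, zpow_natCast,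
    ← zpow_natCast ((2 : ZMod p) ^ (-(N : ℤ))) k, ← zpow_mul]

section terms
variable {p : ℕ} [Fact p.Prime]

lemma term1 (hp2 : (2 : ZMod p) ≠ 0) (N m : ℕ) (J : ℕ → ℕ → ZMod p) (B C : ℕ → ZMod p)
    (S : Finset ℕ) (hS : S ⊆ Finset.Icc 1 (m+1)) :
    (2 : ZMod p) ^ ((N : ℤ) * fExp (m+2) S) *
      (∏ i ∈ insert (m+2) (Finset.Icc 1 (m+1)) \ S, B i) *
      (∏ i ∈ S, C i) * (∏ q ∈ cutSet (m+2) S, J q.1 q.2)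
    = B (m+2) * (2 : ZMod p) ^ (m * N) *
      ((2 : ZMod p) ^ ((N : ℤ) * fExp (m+1) S) *
        (∏ i ∈ Finset.Icc 1 (m+1) \ S, B i) *
        (∏ i ∈ S, (2 : ZMod p) ^ (-(N : ℤ)) * C i * J i (m+2)) *
        (∏ q ∈ cutSet (m+1) S, J q.1 q.2)) := by
  have hnS : m+2 ∉ S := fun h => by have := Finset.mem_Icc.mp (hS h); omega
  have hsd : insert (m+2) (Finset.Icc 1 (m+1)) \ S = insert (m+2) (Finset.Icc 1 (m+1) \ S) := by
    ext x
    simp only [Finset.mem_sdiff, Finset.mem_insert, Finset.mem_Icc]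
    constructor
    · rintro ⟨rfl | h1, h2⟩
      · exact Or.inl rfl
      · exact Or.inr ⟨h1, h2⟩
    · rintro (rfl | ⟨h1, h2⟩)
      · exact ⟨Or.inl rfl, hnS⟩
      · exact ⟨Or.inr h1, h2⟩
  have hmem : m+2 ∉ Finset.Icc 1 (m+1) \ S := by simp [Finset.mem_Icc]
  have hcard : (cutSet (m+2) S).card = (cutSet (m+1) S).card + S.card := by
    rw [cutSet_step m S hS, Finset.card_union_of_disjoint (disj_cut _ _ (by omega) _ _),
      Finset.card_image_of_injective _ (inj_pair _)]
  rw [hsd, Finset.prod_insert hmem, cutSet_step m S hS,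
    Finset.prod_union (disj_cut _ _ (by omega) _ _),
    Finset.prod_image (fun a _ b _ h => inj_pair (m+2) h),
    hsplit_gen hp2 N m S.card S S hcard,
    Finset.prod_mul_distrib, Finset.prod_mul_distrib, Finset.prod_const]
  ring

lemma term2 (hp2 : (2 : ZMod p) ≠ 0) (N m : ℕ) (J : ℕ → ℕ → ZMod p) (B C : ℕ → ZMod p)
    (S : Finset ℕ) (hS : S ⊆ Finset.Icc 1 (m+1)) :
    (2 : ZMod p) ^ ((N : ℤ) * fExp (m+2) (insert (m+2) S)) *
      (∏ i ∈ insert (m+2) (Finset.Icc 1 (m+1)) \ insert (m+2) S, B i) *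
      (∏ i ∈ insert (m+2) S, C i) * (∏ q ∈ cutSet (m+2) (insert (m+2) S), J q.1 q.2)
    = C (m+2) * (2 : ZMod p) ^ (m * N) *
      ((2 : ZMod p) ^ ((N : ℤ) * fExp (m+1) S) *
        (∏ i ∈ Finset.Icc 1 (m+1) \ S, (2 : ZMod p) ^ (-(N : ℤ)) * B i * J i (m+2)) *
        (∏ i ∈ S, C i) *
        (∏ q ∈ cutSet (m+1) S, J q.1 q.2)) := by
  have hnS : m+2 ∉ S := fun h => by have := Finset.mem_Icc.mp (hS h); omega
  have hsd : insert (m+2) (Finset.Icc 1 (m+1)) \ insert (m+2) S = Finset.Icc 1 (m+1) \ S := by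
    ext x
    simp only [Finset.mem_sdiff, Finset.mem_insert, Finset.mem_Icc]
    constructor
    · rintro ⟨rfl | h1, h2⟩
      · exact absurd (Or.inl rfl) h2
      · exact ⟨h1, fun h => h2 (Or.inr h)⟩
    · rintro ⟨h1, h2⟩
      refine ⟨Or.inr h1, ?_⟩
      rintro (rfl | h)
      · omega
      · exact h2 h
  have hcard : (cutSet (m+2) (insert (m+2) S)).card =
      (cutSet (m+1) S).card + (Finset.Icc 1 (m+1) \ S).card := by
    rw [cutSet_insert_step m S hS, Finset.card_union_of_disjoint (disj_cut _ _ (by omega) _ _),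
      Finset.card_image_of_injective _ (inj_pair _)]
  rw [hsd, Finset.prod_insert hnS, cutSet_insert_step m S hS,
    Finset.prod_union (disj_cut _ _ (by omega) _ _),
    Finset.prod_image (fun a _ b _ h => inj_pair (m+2) h),
    hsplit_gen hp2 N m (Finset.Icc 1 (m+1) \ S).card (insert (m+2) S) S hcard,
    Finset.prod_mul_distrib, Finset.prod_mul_distrib, Finset.prod_const]
  ring
end terms


/-- Downward self-reducibility of the mod-`p` partition function (Lemma 2.2). -/
theorem stmt0 (p : ℕ) [Fact p.Prime] (hodd : Odd p) (N : ℕ) (n : ℕ) (hn : 2 ≤ n)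
    (J : ℕ → ℕ → ZMod p) (B C : ℕ → ZMod p) :
    Zmod p N n J B C =
      C n * (2 : ZMod p) ^ ((n - 2) * N) *
        Zmod p N (n - 1) J (fun i => (2 : ZMod p) ^ (-(N : ℤ)) * B i * J i n) C
      + B n * (2 : ZMod p) ^ ((n - 2) * N) *
        Zmod p N (n - 1) J B (fun i => (2 : ZMod p) ^ (-(N : ℤ)) * C i * J i n) := by
  obtain ⟨m, rfl⟩ : ∃ m, n = m + 2 := ⟨n - 2, by omega⟩
  have hp2 : (2 : ZMod p) ≠ 0 := by
    intro h
    have h2 : ((2 : ℕ) : ZMod p) = 0 := by exact_mod_cast h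
    have hdvd : p ∣ 2 := (ZMod.natCast_eq_zero_iff 2 p).mp h2
    have hp : p.Prime := Fact.out
    have : p = 2 := (Nat.prime_dvd_prime_iff_eq hp Nat.prime_two).mp hdvd
    obtain ⟨k, hk⟩ := hodd
    omega
  have hnmem : (m+2) ∉ Finset.Icc 1 (m+1) := by simp
  have hIcc : Finset.Icc 1 (m+2) = insert (m+2) (Finset.Icc 1 (m+1)) := by
    ext x
    simp only [Finset.mem_Icc, Finset.mem_insert]
    omega
  simp only [Zmod, show m + 2 - 1 = m + 1 from by omega, show m + 2 - 2 = m from by omega]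
  rw [hIcc, Finset.sum_powerset_insert hnmem, Finset.mul_sum, Finset.mul_sum, add_comm]
  congr 1
  · exact Finset.sum_congr rfl fun S hS => term2 hp2 N m J B C S (Finset.mem_powerset.mp hS)
  · exact Finset.sum_congr rfl fun S hS => term1 hp2 N m J B C S (Finset.mem_powerset.mp hS)
end

section
/- Let p be a prime, T ≥ 1 an integer, and fix v₁, v₂ ∈ (ZMod p)^T. Let K and M be independent random vectors, each uniformly distributed on (ZMod p)^T, and for x ∈ ZMod p define D(x) = (2−x)·v₁ + (x−1)·v₂ + (x−1)(x−2)·(K + x·M) ∈ (ZMod p)^T. Then for every x₁, x₂ ∈ ZMod p with x₁ ≠ x₂ and x₁, x₂ ∉ {1, 2}, and every y₁, y₂ ∈ (ZMod p)^T: ℙ(D(x₁) = y₁) = p^{−T}, ℙ(D(x₂) = y₂) = p^{−T}, and ℙ(D(x₁) = y₁ and D(x₂) = y₂) = p^{−2T}; in particular D(x₁) and D(x₂) are independent and each uniformly distributed over (ZMod p)^T. -/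
noncomputable def uniformMeasure (Ω : Type*) [Fintype Ω] [Nonempty Ω] :
    @MeasureTheory.Measure Ω ⊤ :=
  @PMF.toMeasure Ω ⊤ (PMF.uniformOfFintype Ω)

lemma uniformMeasure_apply (Ω : Type*) [Fintype Ω] [Nonempty Ω] (s : Set Ω) :
    uniformMeasure Ω s = Nat.card s / Fintype.card Ω := by
  classical
  rw [uniformMeasure, @PMF.toMeasure_uniformOfFintype_apply Ω _ _ s ⊤ trivial,
    Nat.card_eq_fintype_card]

def graphEquiv {A B : Type*} (f : B → A) : {ω : A × B // ω.1 = f ω.2} ≃ B where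
  toFun ω := ω.1.2
  invFun b := ⟨(f b, b), rfl⟩
  left_inv := fun ⟨⟨a, b⟩, h⟩ => by simp at h; simp [h]
  right_inv b := rfl

lemma card_graph {A B : Type*} [Fintype B] (f : B → A) :
    Nat.card {ω : A × B | ω.1 = f ω.2} = Fintype.card B := by
  exact (Nat.card_congr (graphEquiv f)).trans Nat.card_eq_fintype_card

lemma solve {p : ℕ} [Fact p.Prime] (x k m a b y : ZMod p) (h1 : x ≠ 1) (h2 : x ≠ 2) :
    (2 - x) * a + (x - 1) * b + (x - 1) * (x - 2) * (k + x * m) = y ↔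
    k = ((x - 1) * (x - 2))⁻¹ * (y - (2 - x) * a - (x - 1) * b) - x * m := by
  have ha : (x - 1) * (x - 2) ≠ 0 :=
    mul_ne_zero (sub_ne_zero.mpr h1) (sub_ne_zero.mpr h2)
  rw [eq_sub_iff_add_eq, eq_inv_mul_iff_mul_eq₀ ha]
  constructor <;> intro h <;> linear_combination h

/-- Pairwise independence and uniformity of the randomized vector-polynomial
construction `D(x) = (2-x)v₁ + (x-1)v₂ + (x-1)(x-2)(K + xM)` (Lemma 2.3). -/
theorem stmt1 (p T : ℕ) [Fact p.Prime] (hT : 1 ≤ T)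
    (v₁ v₂ : Fin T → ZMod p) (x₁ x₂ : ZMod p)
    (hne : x₁ ≠ x₂) (h11 : x₁ ≠ 1) (h12 : x₁ ≠ 2) (h21 : x₂ ≠ 1) (h22 : x₂ ≠ 2)
    (y₁ y₂ : Fin T → ZMod p) :
    let D : ((Fin T → ZMod p) × (Fin T → ZMod p)) → ZMod p → (Fin T → ZMod p) :=
      fun KM x i => (2 - x) * v₁ i + (x - 1) * v₂ i + (x - 1) * (x - 2) * (KM.1 i + x * KM.2 i)
    let μ := uniformMeasure ((Fin T → ZMod p) × (Fin T → ZMod p))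
    μ {ω | D ω x₁ = y₁} = ((p : ENNReal) ^ T)⁻¹ ∧
    μ {ω | D ω x₂ = y₂} = ((p : ENNReal) ^ T)⁻¹ ∧
    μ {ω | D ω x₁ = y₁ ∧ D ω x₂ = y₂} = ((p : ENNReal) ^ (2 * T))⁻¹ := by
  intro D μ
  have hp : (p : ENNReal) ≠ 0 := Nat.cast_ne_zero.mpr (Fact.out (p := p.Prime)).ne_zero
  have hcard : Fintype.card (Fin T → ZMod p) = p ^ T := by
    simp [ZMod.card]
  have hΩ : (Fintype.card ((Fin T → ZMod p) × (Fin T → ZMod p)) : ENNReal)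
      = (p : ENNReal) ^ T * (p : ENNReal) ^ T := by
    rw [Fintype.card_prod, hcard]; push_cast; ring
  -- the "b" vectors
  obtain ⟨b₁, hb₁⟩ : ∃ b : Fin T → ZMod p,
      b = fun i => ((x₁ - 1) * (x₁ - 2))⁻¹ * (y₁ i - (2 - x₁) * v₁ i - (x₁ - 1) * v₂ i) :=
    ⟨_, rfl⟩
  obtain ⟨b₂, hb₂⟩ : ∃ b : Fin T → ZMod p,
      b = fun i => ((x₂ - 1) * (x₂ - 2))⁻¹ * (y₂ i - (2 - x₂) * v₁ i - (x₂ - 1) * v₂ i) :=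
    ⟨_, rfl⟩
  have hS1 : {ω : (Fin T → ZMod p) × (Fin T → ZMod p) | D ω x₁ = y₁}
      = {ω | ω.1 = fun i => b₁ i - x₁ * ω.2 i} := by
    ext ω
    simp only [Set.mem_setOf_eq, funext_iff, D, hb₁]
    exact forall_congr' fun i => solve x₁ (ω.1 i) (ω.2 i) (v₁ i) (v₂ i) (y₁ i) h11 h12
  have hS2 : {ω : (Fin T → ZMod p) × (Fin T → ZMod p) | D ω x₂ = y₂}
      = {ω | ω.1 = fun i => b₂ i - x₂ * ω.2 i} := by
    ext ω
    simp only [Set.mem_setOf_eq, funext_iff, D, hb₂]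
    exact forall_congr' fun i => solve x₂ (ω.1 i) (ω.2 i) (v₁ i) (v₂ i) (y₂ i) h21 h22
  have huni : ∀ (x : ZMod p) (b : Fin T → ZMod p),
      μ {ω : (Fin T → ZMod p) × (Fin T → ZMod p) | ω.1 = fun i => b i - x * ω.2 i}
        = ((p : ENNReal) ^ T)⁻¹ := by
    intro x b
    rw [show μ = uniformMeasure ((Fin T → ZMod p) × (Fin T → ZMod p)) from rfl,
      uniformMeasure_apply,
      card_graph (fun m : Fin T → ZMod p => fun i => b i - x * m i), hcard, hΩ]
    push_cast
    rw [ENNReal.div_eq_inv_mul, ENNReal.mul_inv (Or.inl (pow_ne_zero _ hp))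
      (Or.inr (pow_ne_zero _ hp)), mul_assoc,
      ENNReal.inv_mul_cancel (pow_ne_zero _ hp) (ENNReal.pow_ne_top (ENNReal.natCast_ne_top p)), mul_one]
  refine ⟨hS1 ▸ huni x₁ b₁, hS2 ▸ huni x₂ b₂, ?_⟩
  -- joint event: a single point
  have hx : x₂ - x₁ ≠ 0 := sub_ne_zero.mpr (Ne.symm hne)
  obtain ⟨m₀, hm₀⟩ : ∃ m : Fin T → ZMod p,
      m = fun i => (x₂ - x₁)⁻¹ * (b₂ i - b₁ i) := ⟨_, rfl⟩
  have hS12 : {ω : (Fin T → ZMod p) × (Fin T → ZMod p) | D ω x₁ = y₁ ∧ D ω x₂ = y₂}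
      = {((fun i => b₁ i - x₁ * m₀ i), m₀)} := by
    have e1 := Set.ext_iff.mp hS1
    have e2 := Set.ext_iff.mp hS2
    ext ω
    simp only [Set.mem_setOf_eq, Set.mem_singleton_iff]
    constructor
    · rintro ⟨h1, h2⟩
      have g1 : ω.1 = fun i => b₁ i - x₁ * ω.2 i := (e1 ω).mp h1
      have g2 : ω.1 = fun i => b₂ i - x₂ * ω.2 i := (e2 ω).mp h2
      have hm : ω.2 = m₀ := by
        funext i
        have : b₁ i - x₁ * ω.2 i = b₂ i - x₂ * ω.2 i := by
          rw [← congrFun g1 i, ← congrFun g2 i]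
        rw [hm₀, eq_inv_mul_iff_mul_eq₀ hx]
        linear_combination this
      have : ω = (ω.1, ω.2) := rfl
      rw [this, hm, g1, hm]
    · rintro rfl
      constructor
      · exact (e1 _).mpr rfl
      · refine (e2 _).mpr ?_
        funext i
        show b₁ i - x₁ * m₀ i = b₂ i - x₂ * m₀ i
        have h0 : (x₂ - x₁) * m₀ i = b₂ i - b₁ i := by
          rw [hm₀]; field_simp
        linear_combination h0
  rw [show μ = uniformMeasure ((Fin T → ZMod p) × (Fin T → ZMod p)) from rfl, hS12,
    uniformMeasure_apply]
  simp only [Nat.card_unique, Nat.cast_one]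
  rw [hΩ, one_div, ← pow_add, two_mul]
end

section
/- Let k > 0 be a fixed real constant. There exists n₀ such that for all integers n ≥ n₀ the following holds. Let p be a prime with p ≥ 9 n^{2k+2}, let q be a real number with n^{−k} ≤ q ≤ 1, and let y : {3, 4, …, p} → ZMod p be any function. Define 𝓕 to be the set of polynomials f ∈ (ZMod p)[x] with deg f < n² such that #{x ∈ {3, 4, …, p} : f(x) = y(x)} ≥ (p−2)q/2. Then |𝓕| ≤ 3/q. -/
open Polynomial Finset

private lemma aux_two_mul_le (c : ℕ) : 2 * c ≤ 2 + (c * c - c) := by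
  rcases c with _ | c
  · simp
  · have h : (c+1) * (c+1) - (c+1) = c * (c+1) := by
      rw [Nat.succ_mul]; generalize c * (c+1) = d; omega
    rw [h]
    nlinarith [Nat.zero_le c]

private lemma aux_sum_card {R : Type*} [DecidableEq R] (I : Finset ℕ) (A : Finset R)
    (S : R → Finset ℕ) (hS : ∀ f ∈ A, S f ⊆ I) :
    ∑ x ∈ I, (A.filter (fun f => x ∈ S f)).card = ∑ f ∈ A, (S f).card := by
  simp only [Finset.card_filter]
  rw [Finset.sum_comm]
  refine Finset.sum_congr rfl fun f hf => ?_
  rw [← Finset.card_filter]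
  congr 1
  rw [Finset.filter_mem_eq_inter, Finset.inter_eq_right.mpr (hS f hf)]

private lemma aux_sum_offdiag {R : Type*} [DecidableEq R] (I : Finset ℕ) (A : Finset R)
    (S : R → Finset ℕ) (hS : ∀ f ∈ A, S f ⊆ I) :
    ∑ x ∈ I, ((A.filter (fun f => x ∈ S f)).offDiag).card
      = ∑ z ∈ A.offDiag, (S z.1 ∩ S z.2).card := by
  have key : ∀ x, (A.filter (fun f => x ∈ S f)).offDiag
      = A.offDiag.filter (fun z => x ∈ S z.1 ∧ x ∈ S z.2) := by
    intro x
    ext z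
    simp only [Finset.mem_offDiag, Finset.mem_filter]
    tauto
  simp only [key, Finset.card_filter]
  rw [Finset.sum_comm]
  refine Finset.sum_congr rfl fun z hz => ?_
  rw [← Finset.card_filter]
  have hz1 : z.1 ∈ A := (Finset.mem_offDiag.mp hz).1
  congr 1
  ext x
  simp only [Finset.mem_filter, Finset.mem_inter]
  constructor
  · tauto
  · intro hx
    exact ⟨hS z.1 hz1 hx.1, hx⟩

private lemma aux_inter_card {p : ℕ} (hp : p.Prime) (f g : Polynomial (ZMod p)) (hfg : f ≠ g)
    (d : ℕ) (hf : f.natDegree < d) (hg : g.natDegree < d) (y : ℕ → ZMod p) :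
    ((((Finset.Icc 3 p).filter (fun x : ℕ => f.eval ((x : ZMod p)) = y x)) ∩
      ((Finset.Icc 3 p).filter (fun x : ℕ => g.eval ((x : ZMod p)) = y x))).card) ≤ d - 1 := by
  haveI : Fact p.Prime := ⟨hp⟩
  set T := (((Finset.Icc 3 p).filter (fun x : ℕ => f.eval ((x : ZMod p)) = y x)) ∩
      ((Finset.Icc 3 p).filter (fun x : ℕ => g.eval ((x : ZMod p)) = y x))) with hT
  have hsub : f - g ≠ 0 := sub_ne_zero.mpr hfg
  have hinj : Set.InjOn (fun x : ℕ => (x : ZMod p)) T := by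
    intro x hx y' hy' hxy
    simp only [hT, Finset.coe_inter, Set.mem_inter_iff, Finset.coe_filter, Set.mem_setOf_eq,
      Finset.mem_Icc] at hx hy'
    have h1 : x % p = y' % p := by
      have := (ZMod.natCast_eq_natCast_iff' x y' p).mp hxy
      exact this
    have hx1 : 3 ≤ x ∧ x ≤ p := hx.1.1
    have hy1 : 3 ≤ y' ∧ y' ≤ p := hy'.1.1
    have hp3 : 3 ≤ p := le_trans hx1.1 hx1.2
    rcases eq_or_lt_of_le hx1.2 with h | h <;> rcases eq_or_lt_of_le hy1.2 with h' | h'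
    · omega
    · subst h; rw [Nat.mod_self, Nat.mod_eq_of_lt h'] at h1; omega
    · subst h'; rw [Nat.mod_self, Nat.mod_eq_of_lt h] at h1; omega
    · rw [Nat.mod_eq_of_lt h, Nat.mod_eq_of_lt h'] at h1; exact h1
  have himg : T.image (fun x : ℕ => (x : ZMod p)) ⊆ (f - g).roots.toFinset := by
    intro z hz
    rw [Finset.mem_image] at hz
    obtain ⟨x, hx, rfl⟩ := hz
    rw [hT, Finset.mem_inter, Finset.mem_filter, Finset.mem_filter] at hx
    rw [Multiset.mem_toFinset, mem_roots hsub]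
    simp only [IsRoot, eval_sub, hx.1.2, hx.2.2, sub_self]
  calc T.card = (T.image (fun x : ℕ => (x : ZMod p))).card :=
        (Finset.card_image_of_injOn hinj).symm
    _ ≤ (f - g).roots.toFinset.card := Finset.card_le_card himg
    _ ≤ Multiset.card (f - g).roots := Multiset.toFinset_card_le _
    _ ≤ (f - g).natDegree := Polynomial.card_roots' _
    _ ≤ d - 1 := by
        have := Polynomial.natDegree_sub_le f g
        omega

private lemma aux_final (P A' N2 u q : ℝ) (hq0 : 0 < q) (hq2 : q ≤ 1)
    (hqu : 1 ≤ q * u) (hu1 : 1 ≤ u) (hN2 : 1 ≤ N2) (hP9 : 9 * (u ^ 2 * N2) ≤ P)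
    (hAq : 3 < A' * q) (hA1q : (A' - 1) * q ≤ 3) (hA0 : 0 ≤ A')
    (hM' : A' * (P - 2) * q ≤ 2 * (P - 2) + (A' * A' - A') * (N2 - 1)) : False := by
  have hPq : 9 * N2 - 2 ≤ (P - 2) * q * q := by
    nlinarith [mul_nonneg (sub_nonneg.2 hP9) (mul_nonneg hq0.le hq0.le),
      mul_le_mul hqu hqu zero_le_one (by positivity : (0:ℝ) ≤ q * u),
      mul_le_one₀ hq2 hq0.le hq2, hN2]
  have hbr : 3 * (N2 - 1) < (P - 2) * q * q := by linarith
  have hM2 : A' * ((P - 2) * q * q - 3 * (N2 - 1)) ≤ 2 * (P - 2) * q := by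
    have p1 := mul_le_mul_of_nonneg_right hM' hq0.le
    have p2 := mul_le_mul_of_nonneg_right hA1q
      (mul_nonneg hA0 (sub_nonneg.2 hN2))
    nlinarith [p1, p2]
  have h5 := mul_le_mul_of_nonneg_right hM2 hq0.le
  have h6 : 3 * ((P - 2) * q * q - 3 * (N2 - 1)) < A' * q * ((P - 2) * q * q - 3 * (N2 - 1)) := by
    nlinarith [mul_pos (sub_pos.2 hAq) (sub_pos.2 hbr)]
  nlinarith [h5, h6, hPq, hN2, hq0, hq2]

/-- Lemma 2.5: for `p ≥ 9 n^{2k+2}` prime and `n^{-k} ≤ q ≤ 1`, the set of polynomials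
over `ZMod p` of degree `< n²` agreeing with a given list `y` on at least `(p-2)q/2`
of the points `x ∈ {3,…,p}` has at most `3/q` elements. -/
theorem stmt3 (k : ℝ) (hk : 0 < k) :
    ∃ n₀ : ℕ, ∀ n : ℕ, n₀ ≤ n → ∀ p : ℕ, p.Prime →
      9 * (n : ℝ) ^ (2 * k + 2) ≤ (p : ℝ) →
      ∀ q : ℝ, (n : ℝ) ^ (-k) ≤ q → q ≤ 1 →
      ∀ y : ℕ → ZMod p,
      let F : Set (Polynomial (ZMod p)) :=
        {f | f.natDegree < n ^ 2 ∧
          ((p : ℝ) - 2) * q / 2 ≤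
            (((Finset.Icc 3 p).filter (fun x : ℕ => f.eval ((x : ZMod p)) = y x)).card : ℝ)}
      F.Finite ∧ (F.ncard : ℝ) ≤ 3 / q := by
  refine ⟨1, fun n hn p hp hpk q hq1 hq2 y => ?_⟩
  intro F
  haveI : Fact p.Prime := ⟨hp⟩
  haveI : NeZero p := ⟨hp.ne_zero⟩
  -- basic numeric facts
  have hn1 : (1:ℝ) ≤ (n:ℝ) := by exact_mod_cast hn
  have hn0 : (0:ℝ) < (n:ℝ) := by linarith
  set u : ℝ := (n:ℝ) ^ k with hu_def
  have hu1 : 1 ≤ u := Real.one_le_rpow hn1 hk.le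
  have hu0 : 0 < u := by linarith
  have hq0 : 0 < q := lt_of_lt_of_le (Real.rpow_pos_of_pos hn0 _) hq1
  have hqu : 1 ≤ q * u := by
    rw [Real.rpow_neg hn0.le] at hq1
    calc (1:ℝ) = u⁻¹ * u := by field_simp
    _ ≤ q * u := by gcongr
  set N2 : ℝ := (n:ℝ) ^ 2 with hN2_def
  have hN2 : 1 ≤ N2 := one_le_pow₀ hn1
  have hP9 : 9 * (u ^ 2 * N2) ≤ (p:ℝ) := by
    have hpow : (n:ℝ) ^ (2 * k + 2) = u ^ 2 * N2 := by
      rw [Real.rpow_add hn0, show (2*k) = k*2 by ring, Real.rpow_mul hn0.le,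
        hu_def, hN2_def]
      norm_num [Real.rpow_natCast]
    rw [hpow] at hpk; linarith
  have hp9 : 9 ≤ p := by
    have : (9:ℝ) ≤ (p:ℝ) := by nlinarith
    exact_mod_cast this
  have hn2pos : 1 ≤ n ^ 2 := Nat.one_le_pow _ _ (by omega)
  -- finiteness
  have hFin : F.Finite := by
    apply Set.Finite.of_finite_image (f := fun f : Polynomial (ZMod p) =>
      fun i : Fin (n^2) => f.coeff i)
    · exact Set.toFinite _
    · intro f hf g hg h
      ext i
      by_cases hi : i < n^2
      · exact congrFun h ⟨i, hi⟩
      · rw [Polynomial.coeff_eq_zero_of_natDegree_lt, Polynomial.coeff_eq_zero_of_natDegree_lt]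
        · exact lt_of_lt_of_le hg.1 (le_of_not_gt hi)
        · exact lt_of_lt_of_le hf.1 (le_of_not_gt hi)
  refine ⟨hFin, ?_⟩
  by_contra hcon
  push_neg at hcon
  set m := F.ncard with hm_def
  set a : ℕ := ⌊3/q⌋₊ + 1 with ha_def
  have h3q0 : (0:ℝ) ≤ 3/q := by positivity
  have haq' : 3/q < (a:ℝ) := by
    push_cast [ha_def]
    exact Nat.lt_floor_add_one _
  have hAq : 3 < (a:ℝ) * q := (div_lt_iff₀ hq0).mp haq'
  have hA1q : ((a:ℝ) - 1) * q ≤ 3 := by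
    have h1 : ((a:ℝ) - 1) = (⌊3/q⌋₊ : ℝ) := by push_cast [ha_def]; ring
    rw [h1]
    have := Nat.floor_le h3q0
    calc (⌊3/q⌋₊ : ℝ) * q ≤ (3/q) * q := by gcongr
    _ = 3 := by field_simp
  have hA1 : 1 ≤ a := by omega
  have hcardm : hFin.toFinset.card = m := (Set.ncard_eq_toFinset_card F hFin).symm
  have ham : a ≤ hFin.toFinset.card := by
    rw [hcardm]
    have : ⌊3/q⌋₊ < m := (Nat.floor_lt h3q0).mpr hcon
    omega
  obtain ⟨A, hA_sub, hA_card⟩ := Finset.exists_subset_card_eq ham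
  have hA_mem : ∀ f ∈ A, f ∈ F := fun f hf => hFin.mem_toFinset.mp (hA_sub hf)
  set S : Polynomial (ZMod p) → Finset ℕ :=
    fun f => (Finset.Icc 3 p).filter (fun x : ℕ => f.eval ((x : ZMod p)) = y x) with hS_def
  have hSsub : ∀ f ∈ A, S f ⊆ Finset.Icc 3 p := fun f _ => Finset.filter_subset _ _
  -- the natural-number master inequality
  set T : ℕ := ∑ f ∈ A, (S f).card with hT_def
  have e1 : ∑ x ∈ Finset.Icc 3 p, (A.filter (fun f => x ∈ S f)).card = T :=
    aux_sum_card _ _ _ hSsub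
  have e2 : ∑ x ∈ Finset.Icc 3 p, ((A.filter (fun f => x ∈ S f)).offDiag).card
      = ∑ z ∈ A.offDiag, (S z.1 ∩ S z.2).card := aux_sum_offdiag _ _ _ hSsub
  have e3 : ∑ z ∈ A.offDiag, (S z.1 ∩ S z.2).card ≤ (a * a - a) * (n^2 - 1) := by
    calc ∑ z ∈ A.offDiag, (S z.1 ∩ S z.2).card ≤ ∑ _z ∈ A.offDiag, (n^2 - 1) := by
          refine Finset.sum_le_sum fun z hz => ?_
          obtain ⟨hz1, hz2, hz12⟩ := Finset.mem_offDiag.mp hz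
          exact aux_inter_card hp z.1 z.2 hz12 (n^2) (hA_mem _ hz1).1 (hA_mem _ hz2).1 y
    _ = A.offDiag.card * (n^2 - 1) := by rw [Finset.sum_const, smul_eq_mul]
    _ = (a * a - a) * (n^2 - 1) := by rw [Finset.offDiag_card, hA_card]
  have master : 2 * T ≤ 2 * (p - 2) + (a * a - a) * (n^2 - 1) := by
    have h4 : 2 * T = ∑ x ∈ Finset.Icc 3 p, 2 * (A.filter (fun f => x ∈ S f)).card := by
      rw [← e1, Finset.mul_sum]
    have h5 : ∑ x ∈ Finset.Icc 3 p, 2 * (A.filter (fun f => x ∈ S f)).card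
        ≤ ∑ x ∈ Finset.Icc 3 p, (2 + ((A.filter (fun f => x ∈ S f)).offDiag).card) := by
      refine Finset.sum_le_sum fun x _ => ?_
      rw [Finset.offDiag_card]
      exact aux_two_mul_le _
    have h6 : (Finset.Icc 3 p).card = p - 2 := by
      rw [Nat.card_Icc]; omega
    rw [h4]
    calc _ ≤ _ := h5
    _ = 2 * (p - 2) + ∑ x ∈ Finset.Icc 3 p, ((A.filter (fun f => x ∈ S f)).offDiag).card := by
        rw [Finset.sum_add_distrib, Finset.sum_const, smul_eq_mul, h6, mul_comm]
    _ ≤ 2 * (p - 2) + (a * a - a) * (n^2 - 1) := by rw [e2]; omega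
  -- cast to ℝ
  have h2p : 2 ≤ p := by omega
  have haa : a ≤ a * a := Nat.le_mul_of_pos_left a (by omega)
  have masterR : 2 * (T:ℝ) ≤ 2 * ((p:ℝ) - 2) + ((a:ℝ) * (a:ℝ) - (a:ℝ)) * (N2 - 1) := by
    have := (Nat.cast_le (α := ℝ)).mpr master
    push_cast [Nat.cast_sub h2p, Nat.cast_sub haa, Nat.cast_sub hn2pos] at this
    rw [hN2_def]
    push_cast
    convert this using 2 <;> push_cast <;> ring
  have hT_lb : (a:ℝ) * (((p:ℝ) - 2) * q / 2) ≤ (T:ℝ) := by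
    have h := Finset.card_nsmul_le_sum A (fun f => ((S f).card : ℝ))
      (((p:ℝ) - 2) * q / 2) (fun f hf => (hA_mem f hf).2)
    rw [hA_card, nsmul_eq_mul] at h
    refine le_trans h (le_of_eq ?_)
    rw [hT_def]
    push_cast
    rfl
  -- final contradiction
  have hM' : (a:ℝ) * ((p:ℝ) - 2) * q ≤ 2 * ((p:ℝ) - 2) + ((a:ℝ) * (a:ℝ) - (a:ℝ)) * (N2 - 1) := by
    linarith
  exact aux_final (p:ℝ) (a:ℝ) N2 u q hq0 hq2 hqu hu1 hN2 hP9 hAq hA1q (by positivity) hM'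
end

section
/- Let 𝔽 be a field, let (x₁,y₁), …, (x_L,y_L) ∈ 𝔽², and let d ≥ 1, m ≥ 0, ℓ ≥ 0 be integers such that (m+1)(ℓ+1) + d·ℓ·(ℓ+1)/2 > L. Then there exists a nonzero polynomial Q(x,y) = Σ_{j=0}^{ℓ} q_j(x)·y^j, where each q_j ∈ 𝔽[x] has deg q_j ≤ m + (ℓ−j)·d (so that Q has (1,d)-weighted degree at most m + ℓd and y-degree at most ℓ), satisfying Q(x_i, y_i) = 0 for every i = 1, …, L. -/
open Polynomial

/-- The linear-algebra counting step in Sudan's list decoder: if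
`(m+1)(ℓ+1) + dℓ(ℓ+1)/2 > L` then there is a nonzero bivariate polynomial
`Q(x,y) = Σ_{j≤ℓ} q_j(x) yʲ` with `deg q_j ≤ m + (ℓ-j)d` vanishing on all `L` points. -/
theorem stmt4 {F : Type*} [Field F] (L : ℕ) (hL : 1 ≤ L) (x y : Fin L → F)
    (d m l : ℕ) (hd : 1 ≤ d)
    (h : L < (m + 1) * (l + 1) + d * l * (l + 1) / 2) :
    ∃ Q : Polynomial (Polynomial F), Q ≠ 0 ∧ Q.natDegree ≤ l ∧
      (∀ j, j ≤ l → (Q.coeff j).natDegree ≤ m + (l - j) * d) ∧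
      ∀ i, Polynomial.eval (y i) (Q.map (Polynomial.evalRingHom (x i))) = 0 := by
  classical
  set n : Fin (l + 1) → ℕ := fun j => m + 1 + (l - (j : ℕ)) * d with hn
  haveI : ∀ j : Fin (l + 1), FiniteDimensional F (degreeLT F (n j)) := fun j =>
    LinearEquiv.finiteDimensional (degreeLTEquiv F (n j)).symm
  -- the evaluation linear map
  set φ : (∀ j : Fin (l + 1), degreeLT F (n j)) →ₗ[F] (Fin L → F) :=
    LinearMap.pi (fun i => ∑ j : Fin (l + 1),
      (y i ^ (j : ℕ)) • ((Polynomial.leval (x i)).comp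
        (((degreeLT F (n j)).subtype).comp (LinearMap.proj j)))) with hφ
  -- dimension count
  have hfr : Module.finrank F (∀ j : Fin (l + 1), degreeLT F (n j)) =
      (m + 1) * (l + 1) + d * l * (l + 1) / 2 := by
    rw [Module.finrank_pi_fintype]
    have hfr1 : ∀ j : Fin (l + 1), Module.finrank F (degreeLT F (n j)) = n j := by
      intro j
      rw [LinearEquiv.finrank_eq (degreeLTEquiv F (n j))]
      simp
    simp_rw [hfr1]
    have hsum : ∑ j : Fin (l + 1), n j
        = ∑ j ∈ Finset.range (l + 1), (m + 1 + (l - j) * d) :=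
      Fin.sum_univ_eq_sum_range (fun j => m + 1 + (l - j) * d) (l + 1)
    rw [hsum, Finset.sum_add_distrib, Finset.sum_const, Finset.card_range]
    have h2 : ∑ j ∈ Finset.range (l + 1), (l - j) * d
        = (∑ j ∈ Finset.range (l + 1), j) * d := by
      rw [← Finset.sum_mul]
      congr 1
      rw [← Finset.sum_range_reflect]
      apply Finset.sum_congr rfl
      intro j hj
      simp only [Finset.mem_range] at hj
      omega
    rw [h2, Finset.sum_range_id]
    obtain ⟨k, hk⟩ : 2 ∣ (l + 1) * l := by
      rcases Nat.even_mul_succ_self l with ⟨k, hk⟩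
      exact ⟨k, by linarith [hk]⟩
    have hA : (l + 1) * (l + 1 - 1) / 2 = k := by
      have h1 : l + 1 - 1 = l := rfl
      rw [h1]; omega
    have hB : d * l * (l + 1) / 2 = d * k := by
      have : d * l * (l + 1) = (d * k) * 2 := by
        have : d * l * (l + 1) = d * ((l + 1) * l) := by ring
        rw [this, hk]; ring
      omega
    rw [smul_eq_mul, hA, hB]
    ring
  -- φ is not injective
  have hninj : ¬ Function.Injective φ := by
    intro hinj
    have hle := LinearMap.finrank_le_finrank_of_injective hinj
    rw [hfr, Module.finrank_pi] at hle
    simp only [Fintype.card_fin] at hle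
    omega
  rw [← LinearMap.ker_eq_bot] at hninj
  obtain ⟨v, hvker, hv0⟩ := Submodule.exists_mem_ne_zero_of_ne_bot hninj
  rw [LinearMap.mem_ker] at hvker
  -- build Q
  set Q : Polynomial (Polynomial F) :=
    ∑ j : Fin (l + 1), Polynomial.C ((v j : F[X])) * Polynomial.X ^ (j : ℕ) with hQ
  have hcoeff : ∀ k : ℕ, Q.coeff k = if hk : k < l + 1 then (v ⟨k, hk⟩ : F[X]) else 0 := by
    intro k
    rw [hQ, finset_sum_coeff]
    simp only [coeff_C_mul, coeff_X_pow, mul_ite, mul_one, mul_zero]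
    split
    · next hk =>
      rw [Finset.sum_eq_single ⟨k, hk⟩]
      · simp
      · intro b _ hb
        have hne : ¬ (k = (b : ℕ)) := fun hkb => hb (Fin.val_injective hkb.symm)
        rw [if_neg hne]
      · intro hne; exact absurd (Finset.mem_univ _) hne
    · next hk =>
      apply Finset.sum_eq_zero
      intro b _
      have hbl := b.isLt
      have hne : ¬ (k = (b : ℕ)) := by omega
      rw [if_neg hne]
  refine ⟨Q, ?_, ?_, ?_, ?_⟩
  · -- Q ≠ 0
    obtain ⟨j, hj⟩ : ∃ j, v j ≠ 0 := by
      by_contra hc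
      push_neg at hc
      exact hv0 (funext hc)
    intro hQ0
    apply hj
    have := hcoeff (j : ℕ)
    rw [hQ0, Polynomial.coeff_zero] at this
    rw [dif_pos j.isLt] at this
    simp only [Fin.eta] at this
    exact Subtype.ext this.symm
  · -- natDegree ≤ l
    rw [Polynomial.natDegree_le_iff_coeff_eq_zero]
    intro N hN
    rw [hcoeff N, dif_neg (by omega)]
  · -- coefficient degree bounds
    intro j hj
    rw [hcoeff j, dif_pos (by omega : j < l + 1)]
    have hmem := (v ⟨j, by omega⟩).2
    rw [Polynomial.mem_degreeLT] at hmem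
    by_cases hz : (v ⟨j, by omega⟩ : F[X]) = 0
    · rw [hz]; simp
    · have := (Polynomial.natDegree_lt_iff_degree_lt hz).mpr hmem
      simp only [hn] at this
      omega
  · -- vanishing
    intro i
    have hvi : φ v i = 0 := by rw [hvker]; rfl
    rw [hφ] at hvi
    simp only [LinearMap.pi_apply, LinearMap.sum_apply, LinearMap.smul_apply,
      LinearMap.comp_apply, LinearMap.proj_apply, Submodule.coe_subtype,
      Polynomial.leval_apply, smul_eq_mul] at hvi
    rw [hQ]
    rw [Polynomial.map_sum]
    simp only [Polynomial.map_mul, Polynomial.map_C, Polynomial.map_pow, Polynomial.map_X,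
      Polynomial.eval_finset_sum, Polynomial.eval_mul, Polynomial.eval_pow,
      Polynomial.eval_C, Polynomial.eval_X, Polynomial.coe_evalRingHom]
    rw [← hvi]
    apply Finset.sum_congr rfl
    intro j _
    ring
end

section
/- Let 𝔽 be a field, let d ≥ 1, m ≥ 0, ℓ ≥ 0 be integers, and let Q(x,y) = Σ_{j=0}^{ℓ} q_j(x)·y^j be a nonzero bivariate polynomial over 𝔽 with deg q_j ≤ m + (ℓ−j)·d for each j. Let f ∈ 𝔽[x] with deg f ≤ d, and suppose there exist more than m + ℓd elements x ∈ 𝔽 at which Q(x, f(x)) = 0. Then the univariate polynomial Q(x, f(x)) is identically zero, and consequently the polynomial y − f(x) divides Q(x,y) in (𝔽[x])[y]. -/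
/-- The factor-extraction step of Sudan's list decoder: if the nonzero bivariate
polynomial `Q(x,y) = Σ_j q_j(x) yʲ` (with `deg q_j ≤ m + (ℓ-j)d`, `y`-degree `≤ ℓ`)
satisfies `Q(a, f(a)) = 0` at more than `m + ℓd` points `a`, for some `f` of degree
`≤ d`, then `Q(x, f(x))` is the zero polynomial and `y − f(x)` divides `Q`. -/
theorem stmt5 {F : Type*} [Field F] (d m l : ℕ) (hd : 1 ≤ d)
    (Q : Polynomial (Polynomial F)) (hQ : Q ≠ 0) (hdegy : Q.natDegree ≤ l)
    (hcoeff : ∀ j, (Q.coeff j).natDegree ≤ m + (l - j) * d)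
    (f : Polynomial F) (hf : f.natDegree ≤ d)
    (S : Finset F) (hS : m + l * d < S.card)
    (hzero : ∀ a ∈ S, Polynomial.eval a (Q.eval f) = 0) :
    Q.eval f = 0 ∧ (Polynomial.X - Polynomial.C f) ∣ Q := by
  have hdeg : (Q.eval f).natDegree ≤ m + l * d := by
    rw [Polynomial.eval_eq_sum]
    refine (Polynomial.natDegree_sum_le _ _).trans ?_
    rw [Finset.fold_max_le]
    refine ⟨Nat.zero_le _, fun j hj => ?_⟩
    have hjl : j ≤ l := (Polynomial.le_natDegree_of_mem_supp j hj).trans hdegy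
    calc (Q.coeff j * f ^ j).natDegree
        ≤ (Q.coeff j).natDegree + (f ^ j).natDegree := Polynomial.natDegree_mul_le
      _ ≤ (m + (l - j) * d) + j * d := by
          gcongr
          · exact hcoeff j
          · exact (Polynomial.natDegree_pow_le).trans (by gcongr)
      _ = m + l * d := by
          rw [add_assoc, ← add_mul, Nat.sub_add_cancel hjl]
  have h1 : Q.eval f = 0 :=
    Polynomial.eq_zero_of_natDegree_lt_card_of_eval_eq_zero' _ S hzero (hdeg.trans_lt hS)
  exact ⟨h1, Polynomial.dvd_iff_isRoot.mpr h1⟩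
end

section
/- Fix β > 0 and real constants k > 0 and α > 0, and set C(α,k) = 3α + 21k/2 + 11. Then there exist a constant C₁ > 0 and n₀ such that the following holds for all integers n ≥ n₀: for every integer N with C(α,k)·log₂ n ≤ N ≤ n^α and every prime p with 9·n^{2k+2} ≤ p ≤ 2(2+α+2k)·N·n^{2k+2}·log₂ n, if J is a standard normal random variable and A = ⌊2^N · exp(β·J/√n)⌋ ∈ ℤ, then max_{0 ≤ ℓ ≤ p−1} | ℙ(A ≡ ℓ (mod p)) − 1/p | ≤ C₁ / (N·n^{5k+4}). -/
/-!
Put `T = 2 ^ N`, `c = β / √n`, `A = ⌊T * exp (c * J)⌋` and `a m = ℙ(A = m)`. For any probability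
sequence `a` on `ℕ`, the `p` residue-class sums differ pairwise by at most the total variation
`∑ |a m - a (m + 1)|`, hence each is within that distance of `1 / p`.

For `m ≥ 1`, `a m` is the integral over `[m, m + 1]` of the density of `T * exp (c * J)`.
Completing the square writes this density as `exp (c ^ 2 / 2) / (c * T)` times the standard
Gaussian density at an increasing function of `t` that vanishes at the mode `T * exp (-c ^ 2)`. So
`(a m)_{m ≥ 1}` is bounded by `exp (c ^ 2 / 2) / (c * T)` and increases, resp. decreases, away from
at most two indices around the mode, while `a 0 ≤ exp (c ^ 2 / 2) / T` by a Chernoff bound. The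
total variation is therefore `O(√n / 2 ^ N)`, and `2 ^ N ≥ n ^ (3α + 21k/2 + 11)` beats
`√n * N * n ^ (5k + 4)`.
-/

open MeasureTheory ProbabilityTheory Real

lemma tsum_eq_sum_range_tsum_residue {f : ℕ → ℝ} (hf : Summable f) (p : ℕ) [NeZero p] :
    ∑' n, f n = ∑ i ∈ Finset.range p, ∑' j, f (i + p * j) := by
  rw [Nat.sumByResidueClasses hf p]
  exact Finset.sum_nbij ZMod.val (fun i _ => Finset.mem_range.2 (ZMod.val_lt i))
    (fun i _ j _ h => ZMod.val_injective p h)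
    (fun i hi => ⟨i, by simp, ZMod.val_natCast_of_lt (Finset.mem_range.1 hi)⟩) (fun _ _ => rfl)

lemma abs_sub_le_sum_range_abs_sub (a : ℕ → ℝ) {i i' n : ℕ} (hi : i ≤ n) (hi' : i' ≤ n) (m : ℕ) :
    |a (i + m) - a (i' + m)| ≤ ∑ k ∈ Finset.range n, |a (k + m) - a (k + m + 1)| := by
  wlog h : i ≤ i' generalizing i i'
  · rw [abs_sub_comm]; exact this hi' hi (by omega)
  calc |a (i + m) - a (i' + m)| ≤ ∑ k ∈ Finset.Ico i i', |a (k + m) - a (k + m + 1)| := by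
        simpa [Real.dist_eq, add_right_comm] using dist_le_Ico_sum_dist (fun k => a (k + m)) h
    _ ≤ _ := Finset.sum_le_sum_of_subset_of_nonneg
        (fun k hk => by simp only [Finset.mem_Ico, Finset.mem_range] at hk ⊢; omega)
        (fun _ _ _ => abs_nonneg _)

theorem abs_tsum_residue_sub_inv_le {a : ℕ → ℝ} (ha : HasSum a 1) {V : ℝ}
    (hV : ∀ M, ∑ m ∈ Finset.range M, |a m - a (m + 1)| ≤ V) {p ℓ : ℕ} (hℓ : ℓ < p) :
    |∑' j, a (ℓ + p * j) - 1 / p| ≤ V := by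
  have : NeZero p := ⟨by omega⟩
  have hd : Summable fun m => |a m - a (m + 1)| :=
    summable_of_sum_range_le (fun _ => abs_nonneg _) hV
  have hinj : ∀ i, Function.Injective (fun j => i + p * j) := fun i j j' h => by
    simpa [NeZero.ne p] using h
  have hres : ∀ i, Summable (fun j => a (i + p * j)) := fun i => ha.summable.comp_injective (hinj i)
  have hblocks : HasSum (fun j => ∑ k ∈ Finset.range p, |a (k + p * j) - a (k + p * j + 1)|)
      (∑' m, |a m - a (m + 1)|) := by
    have hdres : ∀ k ∈ Finset.range p, Summable fun j => |a (k + p * j) - a (k + p * j + 1)| :=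
      fun k _ => hd.comp_injective (hinj k)
    rw [tsum_eq_sum_range_tsum_residue hd p, ← Summable.tsum_finsetSum hdres]
    exact (summable_sum hdres).hasSum
  have hclose : ∀ i < p, |∑' j, a (ℓ + p * j) - ∑' j, a (i + p * j)| ≤ V := by
    intro i hi
    have hdiff : Summable (fun j => ‖a (ℓ + p * j) - a (i + p * j)‖) :=
      ((hres ℓ).sub (hres i)).norm
    calc |∑' j, a (ℓ + p * j) - ∑' j, a (i + p * j)|
        = |∑' j, (a (ℓ + p * j) - a (i + p * j))| := by rw [(hres ℓ).tsum_sub (hres i)]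
      _ ≤ ∑' j, |a (ℓ + p * j) - a (i + p * j)| := by
          simpa only [Real.norm_eq_abs] using norm_tsum_le_tsum_norm hdiff
      _ ≤ ∑' m, |a m - a (m + 1)| :=
          hasSum_le (fun j => abs_sub_le_sum_range_abs_sub a hℓ.le hi.le (p * j))
            (by simpa only [Real.norm_eq_abs] using hdiff.hasSum) hblocks
      _ ≤ V := Real.tsum_le_of_sum_range_le (fun _ => abs_nonneg _) hV
  have hmean : ∑' j, a (ℓ + p * j) - 1 / p
      = (∑ i ∈ Finset.range p, (∑' j, a (ℓ + p * j) - ∑' j, a (i + p * j))) / p := by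
    rw [Finset.sum_sub_distrib, ← tsum_eq_sum_range_tsum_residue ha.summable p, ha.tsum_eq,
      Finset.sum_const, Finset.card_range, nsmul_eq_mul]
    field_simp [NeZero.ne p]
  rw [hmean, abs_div, Nat.abs_cast, div_le_iff₀ (by simp [NeZero.pos p])]
  calc _ ≤ ∑ i ∈ Finset.range p, |∑' j, a (ℓ + p * j) - ∑' j, a (i + p * j)| :=
        Finset.abs_sum_le_sum_abs _ _
    _ ≤ ∑ _i ∈ Finset.range p, V :=
        Finset.sum_le_sum fun i hi => hclose i (Finset.mem_range.1 hi)
    _ = V * p := by simp [mul_comm]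

lemma sum_Ico_abs_sub_of_le_succ {a : ℕ → ℝ} {x y : ℕ} (hxy : x ≤ y)
    (h : ∀ m ∈ Finset.Ico x y, a m ≤ a (m + 1)) :
    ∑ m ∈ Finset.Ico x y, |a m - a (m + 1)| = a y - a x := by
  rw [← Finset.sum_Ico_sub a hxy]
  exact Finset.sum_congr rfl fun m hm => by rw [abs_sub_comm, abs_of_nonneg (sub_nonneg.2 (h m hm))]

lemma sum_Ico_abs_sub_of_succ_le {a : ℕ → ℝ} {x y : ℕ} (hxy : x ≤ y)
    (h : ∀ m ∈ Finset.Ico x y, a (m + 1) ≤ a m) :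
    ∑ m ∈ Finset.Ico x y, |a m - a (m + 1)| = a x - a y := by
  have htele := Finset.sum_Ico_sub a hxy
  rw [Finset.sum_congr rfl fun m hm => abs_of_nonneg (sub_nonneg.2 (h m hm))]
  rw [Finset.sum_sub_distrib] at htele ⊢
  linarith

theorem sum_range_abs_sub_le_of_unimodal {a : ℕ → ℝ} {s : ℝ} {L K : ℕ} (hL : 1 ≤ L) (hLK : L ≤ K)
    (hnonneg : ∀ m, 0 ≤ a m) (hle : ∀ m, 1 ≤ m → a m ≤ s)
    (hmono : ∀ m, 1 ≤ m → m < L → a m ≤ a (m + 1)) (hanti : ∀ m, K ≤ m → a (m + 1) ≤ a m)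
    (M : ℕ) :
    ∑ m ∈ Finset.range M, |a m - a (m + 1)| ≤ a 0 + ((K - L : ℕ) + 3) * s := by
  set M' := max M K
  have hstep : ∀ m, 1 ≤ m → |a m - a (m + 1)| ≤ s := fun m hm =>
    abs_sub_le_iff.2 ⟨by linarith [hle m hm, hnonneg (m + 1)],
      by linarith [hle (m + 1) (by omega), hnonneg m]⟩
  have hsplit : ∑ m ∈ Finset.range M', |a m - a (m + 1)| =
      ∑ m ∈ Finset.Ico 0 1, |a m - a (m + 1)| + ∑ m ∈ Finset.Ico 1 L, |a m - a (m + 1)| +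
        ∑ m ∈ Finset.Ico L K, |a m - a (m + 1)| + ∑ m ∈ Finset.Ico K M', |a m - a (m + 1)| := by
    rw [Finset.range_eq_Ico, Finset.sum_Ico_consecutive _ (Nat.zero_le 1) hL,
      Finset.sum_Ico_consecutive _ (by omega) hLK,
      Finset.sum_Ico_consecutive _ (by omega) (le_max_right M K)]
  have hfirst : ∑ m ∈ Finset.Ico 0 1, |a m - a (m + 1)| ≤ a 0 + s := by
    simpa using abs_sub_le_iff.2
      ⟨by linarith [hle 1 le_rfl, hnonneg 1], by linarith [hle 1 le_rfl, hnonneg 0]⟩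
  have hrise : ∑ m ∈ Finset.Ico 1 L, |a m - a (m + 1)| ≤ s := by
    rw [sum_Ico_abs_sub_of_le_succ hL fun m hm => by
      simp only [Finset.mem_Ico] at hm; exact hmono m hm.1 hm.2]
    linarith [hle L hL, hnonneg 1]
  have hmiddle : ∑ m ∈ Finset.Ico L K, |a m - a (m + 1)| ≤ (K - L : ℕ) * s := by
    simpa using Finset.sum_le_card_nsmul (Finset.Ico L K) _ s fun m hm =>
      hstep m (by have := Finset.mem_Ico.1 hm; omega)
  have hfall : ∑ m ∈ Finset.Ico K M', |a m - a (m + 1)| ≤ s := by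
    rw [sum_Ico_abs_sub_of_succ_le (le_max_right M K) fun m hm => by
      simp only [Finset.mem_Ico] at hm; exact hanti m hm.1]
    linarith [hle K (by omega), hnonneg M']
  calc ∑ m ∈ Finset.range M, |a m - a (m + 1)| ≤ ∑ m ∈ Finset.range M', |a m - a (m + 1)| :=
        Finset.sum_le_sum_of_subset_of_nonneg (Finset.range_mono (le_max_left M K))
          fun _ _ _ => abs_nonneg _
    _ ≤ a 0 + ((K - L : ℕ) + 3) * s := by rw [hsplit]; linarith

section FloorResidues

variable {Ω : Type*} [MeasurableSpace Ω] {μ : Measure Ω} {X : Ω → ℝ}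

lemma hasSum_measureReal_floor_eq [IsFiniteMeasure μ] {ι : Type*} [Countable ι]
    (hX : Measurable X) {f : ι → ℕ} (hf : Function.Injective f) :
    HasSum (fun i => μ.real {ω | ⌊X ω⌋ = f i}) (μ.real {ω | ∃ i, ⌊X ω⌋ = f i}) := by
  have hdisj : Pairwise (Function.onFun Disjoint fun i => {ω | ⌊X ω⌋ = f i}) :=
    fun i j hij => Set.disjoint_left.2 fun ω (hi : ⌊X ω⌋ = f i) (hj : ⌊X ω⌋ = f j) =>
      hij (hf (by rw [hi] at hj; exact_mod_cast hj))
  have hmeas : ∀ i, MeasurableSet {ω | ⌊X ω⌋ = f i} := fun i =>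
    (Int.measurable_floor.comp hX) (measurableSet_singleton _)
  have hunion : {ω | ∃ i, ⌊X ω⌋ = f i} = ⋃ i, {ω | ⌊X ω⌋ = f i} := by ext; simp
  have := ENNReal.hasSum_toReal (f := fun i => μ {ω | ⌊X ω⌋ = f i})
    (by rw [← measure_iUnion hdisj hmeas]; exact measure_ne_top _ _)
  rwa [← ENNReal.tsum_toReal_eq fun _ => measure_ne_top _ _, ← measure_iUnion hdisj hmeas,
    ← hunion] at this

lemma Int.modEq_natCast_iff_exists {z : ℤ} (hz : 0 ≤ z) {p ℓ : ℕ} (hℓ : ℓ < p) :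
    z ≡ ℓ [ZMOD p] ↔ ∃ j : ℕ, z = ((ℓ + p * j : ℕ) : ℤ) := by
  lift z to ℕ using hz
  simp only [Int.natCast_modEq_iff, Nat.cast_inj, Nat.ModEq, Nat.mod_eq_of_lt hℓ]
  constructor
  · intro h; exact ⟨z / p, by rw [← h, Nat.mod_add_div]⟩
  · rintro ⟨j, rfl⟩; simp [Nat.mod_eq_of_lt hℓ]

lemma measureReal_floor_modEq [IsFiniteMeasure μ] (hX : Measurable X) (h0 : ∀ ω, 0 ≤ X ω)
    {p ℓ : ℕ} (hℓ : ℓ < p) :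
    μ.real {ω | ⌊X ω⌋ ≡ ℓ [ZMOD p]} = ∑' j : ℕ, μ.real {ω | ⌊X ω⌋ = ((ℓ + p * j : ℕ) : ℤ)} := by
  have hinj : Function.Injective fun j : ℕ => ℓ + p * j := fun j j' h => by
    simpa [show p ≠ 0 by omega] using h
  simp_rw [Int.modEq_natCast_iff_exists (Int.floor_nonneg.2 (h0 _)) hℓ]
  exact ((hasSum_measureReal_floor_eq hX hinj).tsum_eq).symm

lemma hasSum_measureReal_floor_eq_one [IsProbabilityMeasure μ] (hX : Measurable X)
    (h0 : ∀ ω, 0 ≤ X ω) : HasSum (fun m : ℕ => μ.real {ω | ⌊X ω⌋ = m}) 1 := by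
  have hall : {ω | ∃ m : ℕ, ⌊X ω⌋ = m} = Set.univ :=
    Set.eq_univ_of_forall fun ω =>
      ⟨⌊X ω⌋.toNat, (Int.toNat_of_nonneg (Int.floor_nonneg.2 (h0 ω))).symm⟩
  simpa [hall] using hasSum_measureReal_floor_eq (μ := μ) hX Function.injective_id

end FloorResidues

noncomputable def logCoord (T c t : ℝ) : ℝ := (log t - log T) / c

section LogCoord

variable {T c : ℝ}

lemma mul_exp_mul_logCoord (hT : 0 < T) (hc : c ≠ 0) {t : ℝ} (ht : 0 < t) :
    T * exp (c * logCoord T c t) = t := by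
  rw [logCoord, mul_div_cancel₀ _ hc, exp_sub, exp_log ht, exp_log hT]
  field_simp

lemma le_mul_exp_iff (hT : 0 < T) (hc : 0 < c) {t x : ℝ} (ht : 0 < t) :
    t ≤ T * exp (c * x) ↔ logCoord T c t ≤ x := by
  rw [logCoord, div_le_iff₀ hc, ← log_le_log_iff ht (by positivity), log_mul hT.ne' (exp_pos _).ne',
    log_exp]
  constructor <;> intro h <;> linarith

lemma logCoord_mul_exp_neg_sq (hT : 0 < T) (hc : c ≠ 0) (t : ℝ) :
    logCoord (T * exp (-c ^ 2)) c t = logCoord T c t + c := by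
  rw [logCoord, logCoord, log_mul hT.ne' (exp_pos _).ne', log_exp]
  field_simp
  ring

lemma logCoord_nonpos_iff (hT : 0 < T) (hc : 0 < c) {t : ℝ} (ht : 0 < t) :
    logCoord T c t ≤ 0 ↔ t ≤ T := by
  rw [logCoord, div_le_iff₀ hc, zero_mul, sub_nonpos, log_le_log_iff ht hT]

lemma monotoneOn_logCoord (hc : 0 ≤ c) : MonotoneOn (logCoord T c) (Set.Ioi 0) :=
  fun _ hs _ _ hst => div_le_div_of_nonneg_right (by gcongr) hc

lemma hasDerivAt_logCoord {t : ℝ} (ht : t ≠ 0) : HasDerivAt (logCoord T c) (t⁻¹ / c) t :=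
  ((hasDerivAt_log ht).sub_const (log T)).div_const c

end LogCoord

section StandardGaussian

lemma gaussianPDFReal_zero_one_apply (x : ℝ) :
    gaussianPDFReal 0 1 x = (√(2 * π))⁻¹ * exp (-x ^ 2 / 2) := by
  simp [gaussianPDFReal]

lemma continuous_gaussianPDFReal_zero_one : Continuous (gaussianPDFReal 0 1) := by
  simp_rw [funext gaussianPDFReal_zero_one_apply]; fun_prop

lemma gaussianPDFReal_zero_one_eq_exp_mul (c x : ℝ) :
    gaussianPDFReal 0 1 x = exp (c * x + c ^ 2 / 2) * gaussianPDFReal 0 1 (x + c) := by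
  rw [gaussianPDFReal_zero_one_apply, gaussianPDFReal_zero_one_apply, mul_left_comm, ← exp_add]
  ring_nf

lemma gaussianPDFReal_zero_one_le_one (x : ℝ) : gaussianPDFReal 0 1 x ≤ 1 := by
  rw [gaussianPDFReal_zero_one_apply]
  have h2π : 1 ≤ √(2 * π) := one_le_sqrt.2 (by linarith [pi_gt_three])
  have hexp : exp (-x ^ 2 / 2) ≤ 1 := exp_le_one_iff.2 (by nlinarith [sq_nonneg x])
  calc (√(2 * π))⁻¹ * exp (-x ^ 2 / 2) ≤ 1 * 1 :=
        mul_le_mul (inv_le_one_of_one_le₀ h2π) hexp (exp_pos _).le zero_le_one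
    _ = 1 := one_mul 1

lemma monotoneOn_gaussianPDFReal_zero_one : MonotoneOn (gaussianPDFReal 0 1) (Set.Iic 0) := by
  intro x (hx : x ≤ 0) y (hy : y ≤ 0) hxy
  rw [gaussianPDFReal_zero_one_apply, gaussianPDFReal_zero_one_apply]
  exact mul_le_mul_of_nonneg_left (exp_le_exp.2 (by nlinarith)) (by positivity)

lemma antitoneOn_gaussianPDFReal_zero_one : AntitoneOn (gaussianPDFReal 0 1) (Set.Ici 0) := by
  intro x (hx : 0 ≤ x) y (hy : 0 ≤ y) hxy
  rw [gaussianPDFReal_zero_one_apply, gaussianPDFReal_zero_one_apply]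
  exact mul_le_mul_of_nonneg_left (exp_le_exp.2 (by nlinarith)) (by positivity)

lemma gaussianReal_real_Ico {x y : ℝ} (h : x ≤ y) :
    (gaussianReal 0 1).real (Set.Ico x y) = ∫ t in x..y, gaussianPDFReal 0 1 t := by
  rw [measureReal_def, gaussianReal_apply_eq_integral 0 one_ne_zero,
    ENNReal.toReal_ofReal
      (setIntegral_nonneg measurableSet_Ico fun t _ => gaussianPDFReal_nonneg 0 1 t),
    integral_Ico_eq_integral_Ioo, ← integral_Ioc_eq_integral_Ioo, intervalIntegral.integral_of_le h]

end StandardGaussian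

lemma intervalIntegral_le_integral_add_one_of_monotoneOn {g : ℝ → ℝ} {a : ℝ}
    (hg : MonotoneOn g (Set.Icc a (a + 2))) :
    ∫ t in a..a + 1, g t ≤ ∫ t in a + 1..a + 2, g t := by
  have hIcc : Set.Icc a (a + 1) ⊆ Set.Icc a (a + 2) := Set.Icc_subset_Icc le_rfl (by linarith)
  have hshift : ∀ t ∈ Set.Icc a (a + 1), t + 1 ∈ Set.Icc a (a + 2) := fun t ht =>
    ⟨by linarith [ht.1], by linarith [ht.2]⟩
  have hab : a ≤ a + 1 := by linarith
  rw [show a + 2 = a + 1 + 1 by ring, ← intervalIntegral.integral_comp_add_right]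
  refine intervalIntegral.integral_mono_on hab ?_ ?_ fun t ht =>
    hg (hIcc ht) (hshift t ht) (by linarith)
  · exact (hg.mono (Set.uIcc_of_le hab ▸ hIcc)).intervalIntegrable
  · refine MonotoneOn.intervalIntegrable fun x hx y hy hxy => hg ?_ ?_ (by linarith)
    · exact hshift x (Set.uIcc_of_le hab ▸ hx)
    · exact hshift y (Set.uIcc_of_le hab ▸ hy)

lemma intervalIntegral_add_one_le_integral_of_antitoneOn {g : ℝ → ℝ} {a : ℝ}
    (hg : AntitoneOn g (Set.Icc a (a + 2))) :
    ∫ t in a + 1..a + 2, g t ≤ ∫ t in a..a + 1, g t := by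
  have := intervalIntegral_le_integral_add_one_of_monotoneOn hg.neg
  simp only [intervalIntegral.integral_neg] at this
  linarith

lemma integral_gaussianPDFReal_logCoord {T c : ℝ} (hT : 0 < T) (hc : 0 < c) {a b : ℝ} (ha : 0 < a)
    (hab : a ≤ b) :
    ∫ x in logCoord T c a..logCoord T c b, gaussianPDFReal 0 1 x =
      exp (c ^ 2 / 2) / (c * T) *
        ∫ t in a..b, gaussianPDFReal 0 1 (logCoord (T * exp (-c ^ 2)) c t) := by
  have hpos : ∀ t ∈ Set.uIcc a b, 0 < t := fun t ht =>
    ha.trans_le (by rw [Set.uIcc_of_le hab] at ht; exact ht.1)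
  rw [← intervalIntegral.integral_comp_mul_deriv (fun t ht => hasDerivAt_logCoord (hpos t ht).ne')
      ((continuousOn_inv₀.mono fun t ht => (hpos t ht).ne').div_const c)
      continuous_gaussianPDFReal_zero_one, ← intervalIntegral.integral_const_mul]
  refine intervalIntegral.integral_congr fun t ht => ?_
  have hexp : t⁻¹ = (T * exp (c * logCoord T c t))⁻¹ := by
    rw [mul_exp_mul_logCoord hT hc.ne' (hpos t ht)]
  rw [Function.comp_apply, gaussianPDFReal_zero_one_eq_exp_mul c, exp_add,
    logCoord_mul_exp_neg_sq hT hc.ne', hexp]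
  field_simp

section FloorMass

variable {T c : ℝ}

noncomputable def floorMass (T c : ℝ) (m : ℕ) : ℝ :=
  (gaussianReal 0 1).real {x | ⌊T * exp (c * x)⌋ = m}

lemma floorMass_eq_integral (hT : 0 < T) (hc : 0 < c) {m : ℕ} (hm : 1 ≤ m) :
    floorMass T c m = exp (c ^ 2 / 2) / (c * T) *
      ∫ t in (m : ℝ)..m + 1, gaussianPDFReal 0 1 (logCoord (T * exp (-c ^ 2)) c t) := by
  have hm0 : (0 : ℝ) < m := by exact_mod_cast hm
  have hset : {x | ⌊T * exp (c * x)⌋ = m} = Set.Ico (logCoord T c m) (logCoord T c (m + 1)) := by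
    ext x
    rw [Set.mem_ofPred_eq, Int.floor_eq_iff, Int.cast_natCast, Set.mem_Ico,
      le_mul_exp_iff hT hc hm0, ← not_le,
      le_mul_exp_iff hT hc (by positivity : (0 : ℝ) < m + 1), not_le]
  rw [floorMass, hset, gaussianReal_real_Ico
      (monotoneOn_logCoord hc.le hm0 (show (0 : ℝ) < m + 1 by positivity) (by linarith)),
    integral_gaussianPDFReal_logCoord hT hc hm0 (by linarith)]

lemma floorMass_zero_le (hT : 0 < T) (hc : 0 < c) : floorMass T c 0 ≤ exp (c ^ 2 / 2) / T := by
  have hsub : {x | ⌊T * exp (c * x)⌋ = ((0 : ℕ) : ℤ)} ⊆ {x | id x ≤ logCoord T c 1} := by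
    intro x hx
    have hlt : T * exp (c * x) < 1 := by simpa using (Int.floor_eq_iff.1 hx).2
    exact le_of_lt (not_le.1 fun h => hlt.not_ge ((le_mul_exp_iff hT hc one_pos).2 h))
  calc floorMass T c 0 ≤ (gaussianReal 0 1).real {x | id x ≤ logCoord T c 1} :=
        measureReal_mono hsub
    _ ≤ exp (-(-c) * logCoord T c 1) * mgf id (gaussianReal 0 1) (-c) :=
        measure_le_le_exp_mul_mgf _ (by linarith) (integrable_exp_mul_gaussianReal _)
    _ = exp (c ^ 2 / 2) / T := by
        rw [mgf_id_gaussianReal, logCoord, log_one, zero_sub, neg_neg, mul_div_cancel₀ _ hc.ne',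
          exp_neg, exp_log hT]
        simp [div_eq_inv_mul]

lemma floorMass_le (hT : 0 < T) (hc : 0 < c) {m : ℕ} (hm : 1 ≤ m) :
    floorMass T c m ≤ exp (c ^ 2 / 2) / (c * T) := by
  have hint : ∫ t in (m : ℝ)..m + 1, gaussianPDFReal 0 1 (logCoord (T * exp (-c ^ 2)) c t) ≤ 1 := by
    refine (le_abs_self _).trans ?_
    simpa using intervalIntegral.norm_integral_le_of_norm_le_const (a := m) (b := m + 1) fun t _ =>
      (Real.norm_of_nonneg (gaussianPDFReal_nonneg _ _ _)).trans_le
        (gaussianPDFReal_zero_one_le_one _)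
  rw [floorMass_eq_integral hT hc hm]
  simpa using mul_le_mul_of_nonneg_left hint (by positivity : 0 ≤ exp (c ^ 2 / 2) / (c * T))

lemma floorMass_le_floorMass_succ (hT : 0 < T) (hc : 0 < c) {m : ℕ} (hm : 1 ≤ m)
    (hmode : (m : ℝ) + 2 ≤ T * exp (-c ^ 2)) : floorMass T c m ≤ floorMass T c (m + 1) := by
  have hm0 : (0 : ℝ) < m := by exact_mod_cast hm
  rw [floorMass_eq_integral hT hc hm, floorMass_eq_integral hT hc (by omega), Nat.cast_succ,
    add_assoc, one_add_one_eq_two]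
  refine mul_le_mul_of_nonneg_left (intervalIntegral_le_integral_add_one_of_monotoneOn ?_)
    (by positivity)
  refine monotoneOn_gaussianPDFReal_zero_one.comp
    ((monotoneOn_logCoord hc.le).mono fun t ht => hm0.trans_le ht.1) fun t ht => ?_
  exact (logCoord_nonpos_iff (by positivity) hc (hm0.trans_le ht.1)).2 (by linarith [ht.2])

lemma floorMass_succ_le_floorMass (hT : 0 < T) (hc : 0 < c) {m : ℕ} (hm : 1 ≤ m)
    (hmode : T * exp (-c ^ 2) ≤ m) : floorMass T c (m + 1) ≤ floorMass T c m := by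
  have hm0 : (0 : ℝ) < m := by exact_mod_cast hm
  rw [floorMass_eq_integral hT hc hm, floorMass_eq_integral hT hc (by omega), Nat.cast_succ,
    add_assoc, one_add_one_eq_two]
  refine mul_le_mul_of_nonneg_left (intervalIntegral_add_one_le_integral_of_antitoneOn ?_)
    (by positivity)
  have hmaps : ∀ t ∈ Set.Icc (m : ℝ) (m + 2), 0 ≤ logCoord (T * exp (-c ^ 2)) c t := fun t ht => by
    rw [logCoord, le_div_iff₀ hc, zero_mul, sub_nonneg]
    exact log_le_log (by positivity) (hmode.trans ht.1)
  exact fun x hx y hy hxy => antitoneOn_gaussianPDFReal_zero_one (hmaps x hx) (hmaps y hy)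
    (monotoneOn_logCoord hc.le (hm0.trans_le hx.1) (hm0.trans_le hy.1) hxy)

end FloorMass

theorem sum_range_abs_sub_floorMass_le {T c : ℝ} (hT : 0 < T) (hc : 0 < c) (M : ℕ) :
    ∑ m ∈ Finset.range M, |floorMass T c m - floorMass T c (m + 1)| ≤
      exp (c ^ 2 / 2) * (1 + 5 / c) / T := by
  -- `S` is the mode of the density of `T * exp (c * J)`.
  set S := T * exp (-c ^ 2)
  have hS : 0 < S := by positivity
  set K := ⌈S⌉₊
  set L := max 1 (⌊S⌋₊ - 1)
  have hK : 1 ≤ K := Nat.ceil_pos.2 hS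
  have hLK : L ≤ K := max_le hK (by have := Nat.floor_le_ceil S; omega)
  have hKL : ((K - L : ℕ) : ℝ) ≤ 2 := by
    have := Nat.ceil_le_floor_add_one S
    exact_mod_cast (by omega : K - L ≤ 2)
  have hrise : ∀ m, 1 ≤ m → m < L → floorMass T c m ≤ floorMass T c (m + 1) := fun m hm hmL => by
    have hm2 : m + 2 ≤ ⌊S⌋₊ := by omega
    refine floorMass_le_floorMass_succ hT hc hm ?_
    exact_mod_cast (Nat.cast_le.2 hm2).trans (Nat.floor_le hS.le)
  have hfall : ∀ m, K ≤ m → floorMass T c (m + 1) ≤ floorMass T c m := fun m hm =>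
    floorMass_succ_le_floorMass hT hc (hK.trans hm) ((Nat.le_ceil S).trans (by exact_mod_cast hm))
  calc _ ≤ floorMass T c 0 + ((K - L : ℕ) + 3) * (exp (c ^ 2 / 2) / (c * T)) :=
        sum_range_abs_sub_le_of_unimodal (le_max_left 1 _) hLK (fun _ => measureReal_nonneg)
          (fun _ hm => floorMass_le hT hc hm) hrise hfall M
    _ ≤ exp (c ^ 2 / 2) / T + (2 + 3) * (exp (c ^ 2 / 2) / (c * T)) := by
        gcongr
        exact floorMass_zero_le hT hc
    _ = exp (c ^ 2 / 2) * (1 + 5 / c) / T := by field_simp; ring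

lemma sqrt_mul_mul_rpow_le_two_pow {n N : ℕ} (hn : 2 ≤ n) {α k : ℝ} (hα : 0 ≤ α) (hk : 0 ≤ k)
    (hN : (3 * α + 21 * k / 2 + 11) * logb 2 n ≤ N) (hNα : (N : ℝ) ≤ (n : ℝ) ^ α) :
    √n * (N * (n : ℝ) ^ (5 * k + 4)) ≤ 2 ^ N := by
  have hn1 : (1 : ℝ) ≤ n := by exact_mod_cast (by omega : 1 ≤ n)
  have hn0 : (0 : ℝ) < n := by linarith
  calc √n * (N * (n : ℝ) ^ (5 * k + 4))
        ≤ (n : ℝ) ^ (1 / 2 : ℝ) * ((n : ℝ) ^ α * (n : ℝ) ^ (5 * k + 4)) := by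
        rw [sqrt_eq_rpow]; gcongr
    _ = (n : ℝ) ^ (1 / 2 + α + (5 * k + 4)) := by rw [← rpow_add hn0, ← rpow_add hn0, add_assoc]
    _ ≤ (n : ℝ) ^ (3 * α + 21 * k / 2 + 11) := rpow_le_rpow_of_exponent_le hn1 (by linarith)
    _ = 2 ^ ((3 * α + 21 * k / 2 + 11) * logb 2 n) := by
        rw [mul_comm _ (logb 2 (n : ℝ)), rpow_mul (by norm_num),
          rpow_logb (by norm_num) (by norm_num) hn0]
    _ ≤ 2 ^ (N : ℝ) := rpow_le_rpow_of_exponent_le (by norm_num) hN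
    _ = 2 ^ N := rpow_natCast 2 N

lemma exp_sq_div_two_mul_le {β n : ℝ} (hβ : 0 < β) (hn : 1 ≤ n) :
    exp ((β / √n) ^ 2 / 2) * (1 + 5 / (β / √n)) ≤ exp (β ^ 2 / 2) * (1 + 5 / β) * √n := by
  have hsqrt : 1 ≤ √n := one_le_sqrt.2 hn
  have hsq : (β / √n) ^ 2 ≤ β ^ 2 := by
    rw [div_pow, sq_sqrt (by linarith)]
    exact div_le_self (sq_nonneg β) hn
  have hinv : 1 + 5 / (β / √n) ≤ (1 + 5 / β) * √n := by
    rw [div_div_eq_mul_div, add_mul, one_mul, mul_comm 5, mul_div_assoc]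
    linarith
  rw [mul_assoc]
  exact mul_le_mul (exp_le_exp.2 (by linarith)) hinv (by positivity) (by positivity)

/-- Lemma 2.9: near-uniformity modulo `p` of the truncated log-normal input
`A = ⌊2^N exp(βJ/√n)⌋`, for `J` standard normal, when
`(3α + 21k/2 + 11) log₂ n ≤ N ≤ n^α` and `9 n^{2k+2} ≤ p ≤ 2(2+α+2k) N n^{2k+2} log₂ n`. -/
theorem stmt10 (β k α : ℝ) (hβ : 0 < β) (hk : 0 < k) (hα : 0 < α) :
    ∃ C₁ > (0 : ℝ), ∃ n₀ : ℕ, ∀ n : ℕ, n₀ ≤ n →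
      ∀ N : ℕ, (3 * α + 21 * k / 2 + 11) * Real.logb 2 n ≤ (N : ℝ) →
        (N : ℝ) ≤ (n : ℝ) ^ α →
      ∀ p : ℕ, p.Prime → 9 * (n : ℝ) ^ (2 * k + 2) ≤ (p : ℝ) →
        (p : ℝ) ≤ 2 * (2 + α + 2 * k) * N * (n : ℝ) ^ (2 * k + 2) * Real.logb 2 n →
      ∀ ℓ : ℕ, ℓ ≤ p - 1 →
      |(gaussianReal 0 1
          {x : ℝ | ⌊(2 : ℝ) ^ N * Real.exp (β * x / Real.sqrt n)⌋ ≡ (ℓ : ℤ) [ZMOD (p : ℤ)]}).toReal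
        - 1 / p| ≤ C₁ / ((N : ℝ) * (n : ℝ) ^ (5 * k + 4)) := by
  refine ⟨exp (β ^ 2 / 2) * (1 + 5 / β), by positivity, 2,
    fun n hn N hN hNα p hp _ _ ℓ hℓ => ?_⟩
  have hn1 : (1 : ℝ) ≤ n := by exact_mod_cast (by omega : 1 ≤ n)
  have hℓp : ℓ < p := by have := hp.two_le; omega
  set c := β / √(n : ℝ) with hc_def
  have hc : 0 < c := by positivity
  have hT : (0 : ℝ) < 2 ^ N := by positivity
  have hNpos : (0 : ℝ) < N :=
    (mul_pos (by positivity) (logb_pos one_lt_two (by exact_mod_cast hn))).trans_le hN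
  have hX : Measurable fun x => (2 : ℝ) ^ N * exp (c * x) := by fun_prop
  have hX0 : ∀ x, 0 ≤ (2 : ℝ) ^ N * exp (c * x) := fun x => by positivity
  have hset : {x : ℝ | ⌊(2 : ℝ) ^ N * exp (β * x / √n)⌋ ≡ ℓ [ZMOD p]} =
      {x : ℝ | ⌊(2 : ℝ) ^ N * exp (c * x)⌋ ≡ ℓ [ZMOD p]} := by
    simp_rw [hc_def, div_mul_eq_mul_div]
  rw [← measureReal_def, hset, measureReal_floor_modEq hX hX0 hℓp]
  calc |∑' j, floorMass (2 ^ N) c (ℓ + p * j) - 1 / p|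
      ≤ exp (c ^ 2 / 2) * (1 + 5 / c) / 2 ^ N :=
        abs_tsum_residue_sub_inv_le (hasSum_measureReal_floor_eq_one hX hX0)
          (sum_range_abs_sub_floorMass_le hT hc) hℓp
    _ ≤ exp (β ^ 2 / 2) * (1 + 5 / β) * √n / 2 ^ N :=
        div_le_div_of_nonneg_right (exp_sq_div_two_mul_le hβ hn1) hT.le
    _ ≤ exp (β ^ 2 / 2) * (1 + 5 / β) / (N * (n : ℝ) ^ (5 * k + 4)) := by
        rw [div_le_div_iff₀ hT (by positivity), mul_assoc]
        exact mul_le_mul_of_nonneg_left (sqrt_mul_mul_rpow_le_two_pow hn hα.le hk.le hN hNα)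
          (by positivity)
end

section
/- Let a > 0 be a real number, let J be a standard normal random variable, let X = exp(2·J), and for t ∈ [0,1] define X(t) = (1−t)·X + t·a. Then there exists a constant C > 0, depending only on a, such that for every t ∈ [0,1] the total variation distance between the law of X(t) and the law of X(0) = X satisfies d_TV(X(t), X(0)) ≤ C·t. -/
/-!
Both laws have densities: `X = exp (2 J)` has the log-normal density `f`, and `X(t)` has
`f_t y = (1 - t)⁻¹ f ((y - t a) / (1 - t))`. For `t ≤ 1/2`, split `f_t y - f y` into the
rescaling term `((1 - t)⁻¹ - 1) f (·)` and an increment of `f` over a step of length at most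
`2 t |y - a|`. In `s = log u`, both `u ^ k f u` and `u ^ k |f' u|` are a Gaussian in `s` times
`exp (c s)`, hence bounded for moderate `k`. This gives `|f_t y - f y| ≤ t M / (1 + (y - a) ^ 2)`,
and the total variation distance is at most the integral of this Cauchy envelope, `M π t`.
For `t > 1/2` use `dTV ≤ 1 ≤ 2 t`.
-/

open MeasureTheory ProbabilityTheory

noncomputable def dTV {Ω : Type*} [MeasurableSpace Ω] (μ ν : Measure Ω) : ℝ :=
  ⨆ E : {E : Set Ω // MeasurableSet E}, |(μ E.1).toReal - (ν E.1).toReal|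

open Real Set
open scoped ENNReal

section TotalVariation

variable {Ω : Type*} [MeasurableSpace Ω]

theorem dTV_le_one (μ ν : Measure Ω) [IsProbabilityMeasure μ] [IsProbabilityMeasure ν] :
    dTV μ ν ≤ 1 := by
  have : Nonempty {E : Set Ω // MeasurableSet E} := ⟨⟨∅, .empty⟩⟩
  exact ciSup_le fun E => abs_sub_le_of_nonneg_of_le ENNReal.toReal_nonneg measureReal_le_one
    ENNReal.toReal_nonneg measureReal_le_one

variable {ρ : Measure Ω} {f g h : Ω → ℝ}

theorem withDensity_ofReal_apply_le_add (hh : Integrable h ρ) (hfg : ∀ x, |f x - g x| ≤ h x)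
    {E : Set Ω} (hE : MeasurableSet E) :
    ρ.withDensity (fun x => ENNReal.ofReal (f x)) E ≤
      ρ.withDensity (fun x => ENNReal.ofReal (g x)) E + ENNReal.ofReal (∫ x, h x ∂ρ) := by
  have hh0 : ∀ x, 0 ≤ h x := fun x => (abs_nonneg _).trans (hfg x)
  rw [withDensity_apply _ hE, withDensity_apply _ hE,
    ofReal_integral_eq_lintegral_ofReal hh (.of_forall hh0)]
  calc ∫⁻ x in E, ENNReal.ofReal (f x) ∂ρ
      ≤ ∫⁻ x in E, (ENNReal.ofReal (g x) + ENNReal.ofReal (h x)) ∂ρ := by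
        refine lintegral_mono fun x => (ENNReal.ofReal_le_ofReal ?_).trans ENNReal.ofReal_add_le
        linarith [(abs_le.mp (hfg x)).2]
    _ = ∫⁻ x in E, ENNReal.ofReal (g x) ∂ρ + ∫⁻ x in E, ENNReal.ofReal (h x) ∂ρ :=
        lintegral_add_right' _ hh.aemeasurable.ennreal_ofReal.restrict
    _ ≤ ∫⁻ x in E, ENNReal.ofReal (g x) ∂ρ + ∫⁻ x, ENNReal.ofReal (h x) ∂ρ :=
        add_le_add_right (setLIntegral_le_lintegral _ _) _

theorem dTV_le_integral_of_abs_sub_le {μ ν : Measure Ω} [IsFiniteMeasure μ] [IsFiniteMeasure ν]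
    (hμ : μ = ρ.withDensity fun x => ENNReal.ofReal (f x))
    (hν : ν = ρ.withDensity fun x => ENNReal.ofReal (g x))
    (hh : Integrable h ρ) (hfg : ∀ x, |f x - g x| ≤ h x) : dTV μ ν ≤ ∫ x, h x ∂ρ := by
  have : Nonempty {E : Set Ω // MeasurableSet E} := ⟨⟨∅, .empty⟩⟩
  have hh0 : 0 ≤ ∫ x, h x ∂ρ := integral_nonneg fun x => (abs_nonneg _).trans (hfg x)
  refine ciSup_le fun ⟨E, hE⟩ => abs_sub_le_iff.mpr ⟨?_, ?_⟩ <;> rw [sub_le_iff_le_add']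
  · have := withDensity_ofReal_apply_le_add hh hfg hE
    rw [← hμ, ← hν] at this
    simpa [hh0] using ENNReal.toReal_le_add this (measure_ne_top _ _) ENNReal.ofReal_ne_top
  · have := withDensity_ofReal_apply_le_add hh (fun x => (abs_sub_comm _ _).trans_le (hfg x)) hE
    rw [← hμ, ← hν] at this
    simpa [hh0] using ENNReal.toReal_le_add this (measure_ne_top _ _) ENNReal.ofReal_ne_top

end TotalVariation

theorem map_withDensity_eq_withDensity_indicator {s : Set ℝ} {φ ψ ψ' : ℝ → ℝ}
    {p : ℝ → ℝ≥0∞} (hs : MeasurableSet s) (hφ : Measurable φ) (hφs : ∀ x, φ x ∈ s)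
    (hψφ : Function.LeftInverse ψ φ) (hφψ : ∀ y ∈ s, φ (ψ y) = y)
    (hψ : ∀ y ∈ s, HasDerivWithinAt ψ (ψ' y) s y) :
    (volume.withDensity p).map φ =
      volume.withDensity (s.indicator fun y => ENNReal.ofReal |ψ' y| * p (ψ y)) := by
  ext E hE
  have hpre : φ ⁻¹' E = ψ '' (s ∩ E) := by
    ext x
    refine ⟨fun hx => ⟨φ x, ⟨hφs x, hx⟩, hψφ x⟩, ?_⟩
    rintro ⟨y, ⟨hys, hyE⟩, rfl⟩
    simpa [mem_preimage, hφψ y hys] using hyE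
  have hinj : InjOn ψ (s ∩ E) := fun y hy z hz hyz => by
    rw [← hφψ y hy.1, ← hφψ z hz.1, hyz]
  rw [Measure.map_apply hφ hE, withDensity_apply _ (hφ hE), withDensity_apply _ hE,
    setLIntegral_indicator hs, hpre, lintegral_image_eq_lintegral_abs_deriv_mul (hs.inter hE)
      (fun y hy => (hψ y hy.1).mono inter_subset_left) hinj, inter_comm]

theorem map_affine_withDensity_ofReal {c : ℝ} (hc : c ≠ 0) (d : ℝ) (f : ℝ → ℝ) :
    (volume.withDensity fun x => ENNReal.ofReal (f x)).map (fun x => c * x + d) =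
      volume.withDensity fun y => ENNReal.ofReal (|c|⁻¹ * f ((y - d) / c)) := by
  rw [map_withDensity_eq_withDensity_indicator (ψ := fun y => (y - d) / c) (ψ' := fun _ => c⁻¹)
    MeasurableSet.univ (by fun_prop) (fun _ => mem_univ _) (fun x => by field_simp; ring)
    (fun y _ => by field_simp; ring)
    (fun y _ => (((hasDerivAt_id y).sub_const d).div_const c).hasDerivWithinAt.congr_deriv
      (one_div c)), indicator_univ]
  simp_rw [abs_inv, ← ENNReal.ofReal_mul (inv_nonneg.mpr (abs_nonneg c))]

noncomputable def logNormalPDF (y : ℝ) : ℝ :=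
  if 0 < y then exp (-log y ^ 2 / 8 - log y) / (2 * √(2 * π)) else 0

theorem map_exp_two_mul_gaussianReal :
    (gaussianReal 0 1).map (fun x => exp (2 * x)) =
      volume.withDensity fun y => ENNReal.ofReal (logNormalPDF y) := by
  rw [gaussianReal_of_var_ne_zero 0 one_ne_zero,
    map_withDensity_eq_withDensity_indicator (ψ := fun y => log y / 2) (ψ' := fun y => y⁻¹ / 2)
      measurableSet_Ioi (by fun_prop) (fun x => exp_pos _)
      (fun x => show log (exp (2 * x)) / 2 = x by rw [log_exp]; ring)
      (fun y hy => show exp (2 * (log y / 2)) = y by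
        rw [mul_div_cancel₀ _ two_ne_zero, exp_log hy])
      (fun y hy => ((hasDerivAt_log (ne_of_gt hy)).div_const 2).hasDerivWithinAt)]
  congr 1
  ext y
  by_cases hy : 0 < y
  · rw [indicator_of_mem (mem_Ioi.mpr hy), gaussianPDF, ← ENNReal.ofReal_mul (abs_nonneg _),
      logNormalPDF, if_pos hy, gaussianPDFReal, abs_of_pos (by positivity)]
    congr 1
    rw [exp_sub, exp_log hy]
    push_cast
    field_simp
    ring_nf
  · simp [logNormalPDF, hy]

noncomputable def interpolatedPDF (a t y : ℝ) : ℝ :=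
  (1 - t)⁻¹ * logNormalPDF ((y - t * a) / (1 - t))

theorem map_interpolate_exp_two_mul_gaussianReal {a t : ℝ} (ht : t < 1) :
    (gaussianReal 0 1).map (fun x => (1 - t) * exp (2 * x) + t * a) =
      volume.withDensity fun y => ENNReal.ofReal (interpolatedPDF a t y) := by
  rw [show (fun x => (1 - t) * exp (2 * x) + t * a) =
      (fun y => (1 - t) * y + t * a) ∘ fun x => exp (2 * x) from rfl,
    ← Measure.map_map (by fun_prop) (by fun_prop), map_exp_two_mul_gaussianReal,
    map_affine_withDensity_ofReal (by linarith), abs_of_pos (by linarith)]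
  rfl

section LogNormalPDF

variable {u : ℝ}

theorem logNormalPDF_of_pos (hu : 0 < u) :
    logNormalPDF u = exp (-log u ^ 2 / 8 - log u) / (2 * √(2 * π)) :=
  if_pos hu

theorem logNormalPDF_of_nonpos (hu : u ≤ 0) : logNormalPDF u = 0 :=
  if_neg hu.not_gt

theorem logNormalPDF_nonneg (u : ℝ) : 0 ≤ logNormalPDF u := by
  unfold logNormalPDF
  split_ifs <;> positivity

theorem rpow_mul_logNormalPDF_le {k : ℝ} (hk : |k - 1| ≤ 9 / 4) (hu : 0 < u) :
    u ^ k * logNormalPDF u ≤ exp 11 := by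
  have h2π : 1 ≤ 2 * √(2 * π) := by
    nlinarith [sq_sqrt (by positivity : (0 : ℝ) ≤ 2 * π), sqrt_nonneg (2 * π), pi_gt_three]
  rw [logNormalPDF_of_pos hu, rpow_def_of_pos hu, mul_div_assoc', ← exp_add]
  refine (div_le_self (exp_pos _).le h2π).trans (exp_le_exp.mpr ?_)
  -- the exponent is `(k - 1) s - s² / 8 ≤ 2 (k - 1)²` in `s = log u`
  nlinarith [sq_nonneg (log u - 4 * (k - 1)), sq_abs (k - 1), abs_nonneg (k - 1)]

noncomputable def logNormalPDFDeriv (u : ℝ) : ℝ := -(log u + 4) / (4 * u) * logNormalPDF u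

theorem hasDerivAt_logNormalPDF (hu : 0 < u) : HasDerivAt logNormalPDF (logNormalPDFDeriv u) u := by
  have hlog := hasDerivAt_log hu.ne'
  have hexp := ((((hlog.pow 2).neg.div_const 8).sub hlog).exp).div_const (2 * √(2 * π))
  have heq : logNormalPDF =ᶠ[nhds u]
      fun v => exp (-log v ^ 2 / 8 - log v) / (2 * √(2 * π)) := by
    filter_upwards [Ioi_mem_nhds hu] with v hv using logNormalPDF_of_pos hv
  refine ((hexp.congr_of_eventuallyEq heq).congr_deriv ?_)
  simp only [logNormalPDFDeriv, logNormalPDF_of_pos hu, Pi.sub_apply, Pi.neg_apply, Pi.pow_apply]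
  field_simp
  ring

theorem rpow_mul_abs_logNormalPDFDeriv_le {k : ℝ} (hk0 : 0 ≤ k) (hk4 : k ≤ 4) (hu : 0 < u) :
    u ^ k * |logNormalPDFDeriv u| ≤ 2 * exp 11 := by
  have hf := logNormalPDF_nonneg u
  have hsplit :
      u ^ k * |logNormalPDFDeriv u| = |log u + 4| / 4 * (u ^ (k - 1) * logNormalPDF u) := by
    rw [logNormalPDFDeriv, abs_mul, abs_div, abs_neg, abs_of_pos (by positivity : 0 < 4 * u),
      abs_of_nonneg hf, rpow_sub_one hu.ne']
    field_simp
  -- `1 + x ≤ exp x` at `x = ± s / 4`, where `s = log u` and `exp (± s / 4) = u ^ (± 1/4)`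
  have hlog : |log u + 4| / 4 ≤ u ^ (1 / 4 : ℝ) + u ^ (-1 / 4 : ℝ) := by
    rw [rpow_def_of_pos hu, rpow_def_of_pos hu, div_le_iff₀ (by norm_num), abs_le]
    have h₁ := add_one_le_exp (log u * (1 / 4))
    have h₂ := add_one_le_exp (log u * (-1 / 4))
    have h₃ := exp_pos (log u * (1 / 4))
    have h₄ := exp_pos (log u * (-1 / 4))
    constructor <;> linarith
  calc u ^ k * |logNormalPDFDeriv u|
      ≤ (u ^ (1 / 4 : ℝ) + u ^ (-1 / 4 : ℝ)) * (u ^ (k - 1) * logNormalPDF u) := by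
        rw [hsplit]; gcongr
    _ = u ^ (k - 3 / 4) * logNormalPDF u + u ^ (k - 5 / 4) * logNormalPDF u := by
        rw [add_mul, ← mul_assoc, ← mul_assoc, ← rpow_add hu, ← rpow_add hu]
        ring_nf
    _ ≤ exp 11 + exp 11 := by
        gcongr <;> refine rpow_mul_logNormalPDF_le (abs_le.mpr ⟨?_, ?_⟩) hu <;> linarith
    _ = 2 * exp 11 := by ring

theorem abs_logNormalPDF_sub_le {x y C : ℝ} (hx : 0 < x) (hy : 0 < y)
    (hC : ∀ u ∈ uIcc x y, |logNormalPDFDeriv u| ≤ C) :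
    |logNormalPDF x - logNormalPDF y| ≤ C * |x - y| := by
  have hpos : ∀ u ∈ uIcc x y, 0 < u := fun u hu => lt_of_lt_of_le (lt_min hx hy) hu.1
  simpa only [Real.norm_eq_abs] using (convex_uIcc x y).norm_image_sub_le_of_norm_hasDerivWithin_le
    (fun u hu => (hasDerivAt_logNormalPDF (hpos u hu)).hasDerivWithinAt) hC right_mem_uIcc
    left_mem_uIcc

end LogNormalPDF

section InterpolatedPDF

variable {a t y : ℝ}

theorem abs_inv_one_sub_mul_sub_le {p q : ℝ} (ht0 : 0 ≤ t) (ht : t ≤ 1 / 2) (hp : 0 ≤ p) :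
    |(1 - t)⁻¹ * p - q| ≤ 2 * t * p + |p - q| := by
  have h1t : 1 - t ≠ 0 := by linarith
  have hinv : (1 - t)⁻¹ - 1 = t / (1 - t) := by field_simp; ring
  have hfac : 0 ≤ t / (1 - t) ∧ t / (1 - t) ≤ 2 * t := by
    refine ⟨by apply div_nonneg <;> linarith, ?_⟩
    rw [div_le_iff₀ (by linarith)]
    nlinarith
  calc |(1 - t)⁻¹ * p - q| = |t / (1 - t) * p + (p - q)| := by rw [← hinv]; ring_nf
    _ ≤ |t / (1 - t) * p| + |p - q| := abs_add_le _ _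
    _ ≤ 2 * t * p + |p - q| := by
        rw [abs_of_nonneg (mul_nonneg hfac.1 hp)]
        gcongr
        exact hfac.2

theorem sub_mul_div_one_sub_sub (ht : t < 1) :
    (y - t * a) / (1 - t) - y = t * (y - a) / (1 - t) := by
  have h1t : 1 - t ≠ 0 := by linarith
  field_simp
  ring

theorem abs_sub_mul_div_one_sub_sub_le (ht0 : 0 ≤ t) (ht : t ≤ 1 / 2) :
    |(y - t * a) / (1 - t) - y| ≤ 2 * t * |y - a| := by
  rw [sub_mul_div_one_sub_sub (by linarith), abs_div, abs_mul, abs_of_nonneg ht0,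
    abs_of_pos (show 0 < 1 - t by linarith), div_le_iff₀ (by linarith)]
  nlinarith [abs_nonneg (y - a), mul_nonneg ht0 (abs_nonneg (y - a))]

theorem abs_interpolatedPDF_sub_le_of_le_add_one (ha : 0 < a) (ht0 : 0 ≤ t) (ht : t ≤ 1 / 2)
    (hy : 0 < y) (hya : y ≤ a + 1) :
    |interpolatedPDF a t y - logNormalPDF y| ≤ 6 * t * exp 11 * (a + 1) := by
  rw [interpolatedPDF]
  rcases le_or_gt y (t * a) with hyta | hyta
  · rw [logNormalPDF_of_nonpos (div_nonpos_of_nonpos_of_nonneg (by linarith) (by linarith)),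
      mul_zero, zero_sub, abs_neg, abs_of_nonneg (logNormalPDF_nonneg y)]
    have := rpow_mul_logNormalPDF_le (k := -1) (by norm_num [abs_of_neg]) hy
    rw [rpow_neg_one, inv_mul_le_iff₀ hy] at this
    nlinarith [exp_pos 11]
  · set L := (y - t * a) / (1 - t)
    have hL : 0 < L := div_pos (by linarith) (by linarith)
    have hfL := rpow_mul_logNormalPDF_le (k := 0) (by norm_num [abs_of_neg]) hL
    rw [rpow_zero, one_mul] at hfL
    have hdiff := abs_logNormalPDF_sub_le hL hy (C := 2 * exp 11) fun u hu => by
      simpa using rpow_mul_abs_logNormalPDFDeriv_le le_rfl (by norm_num)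
        (lt_of_lt_of_le (lt_min hL hy) hu.1)
    have hya' : |y - a| ≤ a + 1 := abs_le.mpr ⟨by linarith, by linarith⟩
    calc |(1 - t)⁻¹ * logNormalPDF L - logNormalPDF y|
        ≤ 2 * t * logNormalPDF L + 2 * exp 11 * |L - y| :=
          (abs_inv_one_sub_mul_sub_le ht0 ht (logNormalPDF_nonneg L)).trans (by linarith)
      _ ≤ 2 * t * exp 11 + 2 * exp 11 * (2 * t * (a + 1)) := by
          gcongr
          exact (abs_sub_mul_div_one_sub_sub_le ht0 ht).trans (by gcongr)
      _ ≤ 6 * t * exp 11 * (a + 1) := by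
          nlinarith [mul_nonneg (mul_nonneg ht0 (exp_pos 11).le) ha.le]

theorem abs_interpolatedPDF_sub_le_of_lt (ha : 0 < a) (ht0 : 0 ≤ t) (ht : t ≤ 1 / 2)
    (hya : a < y) :
    |interpolatedPDF a t y - logNormalPDF y| ≤ 6 * t * exp 11 / (y - a) ^ 2 := by
  rw [interpolatedPDF]
  set L := (y - t * a) / (1 - t)
  have hd : 0 < y - a := sub_pos.mpr hya
  have hyL : y ≤ L := by
    have := sub_mul_div_one_sub_sub (a := a) (y := y) (by linarith : t < 1)
    have : 0 ≤ t * (y - a) / (1 - t) := div_nonneg (by positivity) (by linarith)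
    linarith
  have hfL : logNormalPDF L ≤ exp 11 / (y - a) ^ 2 := by
    have h := rpow_mul_logNormalPDF_le (k := 2) (by norm_num [abs_of_pos]) (by linarith : 0 < L)
    rw [rpow_two] at h
    rw [le_div_iff₀ (by positivity)]
    nlinarith [mul_le_mul_of_nonneg_right (pow_le_pow_left₀ hd.le (by linarith : y - a ≤ L) 2)
      (logNormalPDF_nonneg L)]
  have hdiff := abs_logNormalPDF_sub_le (by linarith : 0 < L) (by linarith : 0 < y)
    (C := 2 * exp 11 / (y - a) ^ 3) fun u hu => by
      have hu' : y - a ≤ u := by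
        have := hu.1
        rw [min_eq_right hyL] at this
        linarith
      have h := rpow_mul_abs_logNormalPDFDeriv_le (k := 3) (by norm_num) (by norm_num)
        (by linarith : 0 < u)
      rw [rpow_ofNat] at h
      rw [le_div_iff₀ (by positivity)]
      nlinarith [mul_le_mul_of_nonneg_right (pow_le_pow_left₀ hd.le hu' 3)
        (abs_nonneg (logNormalPDFDeriv u))]
  have hLy : |L - y| ≤ 2 * t * (y - a) := by
    simpa [abs_of_pos hd] using abs_sub_mul_div_one_sub_sub_le (a := a) (y := y) ht0 ht
  calc |(1 - t)⁻¹ * logNormalPDF L - logNormalPDF y|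
      ≤ 2 * t * logNormalPDF L + 2 * exp 11 / (y - a) ^ 3 * |L - y| :=
        (abs_inv_one_sub_mul_sub_le ht0 ht (logNormalPDF_nonneg L)).trans (by linarith)
    _ ≤ 2 * t * (exp 11 / (y - a) ^ 2) + 2 * exp 11 / (y - a) ^ 3 * (2 * t * (y - a)) := by
        gcongr
    _ = 6 * t * exp 11 / (y - a) ^ 2 := by
        field_simp
        ring

theorem exists_abs_interpolatedPDF_sub_le {a : ℝ} (ha : 0 < a) :
    ∃ M, 0 ≤ M ∧ ∀ t, 0 ≤ t → t ≤ 1 / 2 → ∀ y,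
      |interpolatedPDF a t y - logNormalPDF y| ≤ t * (M * (1 + (y - a) ^ 2)⁻¹) := by
  refine ⟨12 * exp 11 * (a + 1) * (1 + (a + 1) ^ 2), by positivity, fun t ht0 ht y => ?_⟩
  rw [← div_eq_mul_inv, ← mul_div_assoc]
  rcases le_or_gt y 0 with hy | hy
  · rw [interpolatedPDF,
      logNormalPDF_of_nonpos (div_nonpos_of_nonpos_of_nonneg (by nlinarith) (by linarith)),
      logNormalPDF_of_nonpos hy, mul_zero, sub_zero, abs_zero]
    positivity
  rcases le_or_gt y (a + 1) with hya | hya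
  · refine (abs_interpolatedPDF_sub_le_of_le_add_one ha ht0 ht hy hya).trans ?_
    rw [le_div_iff₀ (by positivity)]
    have : (y - a) ^ 2 ≤ (a + 1) ^ 2 := sq_le_sq' (by linarith) (by linarith)
    have : 0 ≤ t * exp 11 * (a + 1) := by positivity
    nlinarith
  · refine (abs_interpolatedPDF_sub_le_of_lt ha ht0 ht (by linarith)).trans ?_
    rw [div_le_div_iff₀ (by nlinarith) (by positivity)]
    have hB : 1 ≤ (a + 1) * (1 + (a + 1) ^ 2) := by nlinarith
    have hd : 1 + (y - a) ^ 2 ≤ 2 * ((a + 1) * (1 + (a + 1) ^ 2)) * (y - a) ^ 2 := by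
      nlinarith [mul_le_mul_of_nonneg_right hB (sq_nonneg (y - a))]
    nlinarith [mul_le_mul_of_nonneg_left hd (by positivity : 0 ≤ 6 * t * exp 11)]

end InterpolatedPDF

/-- Lemma 3.2: for `X = exp(2J)` with `J` standard normal and `X(t) = (1-t)X + ta`
with `a > 0`, the total variation distance between the laws of `X(t)` and `X(0)`
is at most `C·t` for a constant `C` depending only on `a`. -/
theorem stmt11 (a : ℝ) (ha : 0 < a) :
    ∃ C > (0 : ℝ), ∀ t : ℝ, 0 ≤ t → t ≤ 1 →
      dTV ((gaussianReal 0 1).map (fun x => (1 - t) * Real.exp (2 * x) + t * a))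
          ((gaussianReal 0 1).map (fun x => Real.exp (2 * x))) ≤ C * t := by
  obtain ⟨M, hM, hbound⟩ := exists_abs_interpolatedPDF_sub_le ha
  refine ⟨M * π + 2, by positivity, fun t ht0 ht1 => ?_⟩
  have : IsProbabilityMeasure ((gaussianReal 0 1).map fun x => exp (2 * x)) :=
    Measure.isProbabilityMeasure_map (by fun_prop)
  rcases le_or_gt t (1 / 2) with ht | ht
  · calc _ ≤ ∫ y, t * (M * (1 + (y - a) ^ 2)⁻¹) :=
          dTV_le_integral_of_abs_sub_le (map_interpolate_exp_two_mul_gaussianReal (by linarith))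
            map_exp_two_mul_gaussianReal
            (((integrable_inv_one_add_sq.comp_sub_right a).const_mul M).const_mul t)
            (hbound t ht0 ht)
      _ = t * (M * π) := by
          rw [integral_const_mul, integral_const_mul,
            integral_sub_right_eq_self (fun y => (1 + y ^ 2)⁻¹), integral_univ_inv_one_add_sq]
      _ ≤ (M * π + 2) * t := by nlinarith [pi_pos]
  · have : IsProbabilityMeasure
        ((gaussianReal 0 1).map fun x => (1 - t) * exp (2 * x) + t * a) :=
      Measure.isProbabilityMeasure_map (by fun_prop)
    exact (dTV_le_one _ _).trans (by nlinarith [mul_nonneg hM pi_pos.le])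
end
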